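/- arXiv:1606.00966 — 5 statements merged into one kernel-verified Lean document; each statement's English description precedes it below -/
import Mathlib

section
/- Fateev–Lukyanov generator, rank 1 case: let H be the rank-one Heisenberg vertex algebra with even field b(z), [b_λ b] = λ, and F the free fermion vertex superalgebra with odd field Ψ(z), [Ψ_λ Ψ] = 1. For γ ∈ C set G(z) = :(γ∂ + b(z))Ψ(z):. Then [G_λ G] = :b²: + γ∂b + :(∂Ψ)Ψ: + (1 − 2γ²)λ²/2; in particular modulo the subspace C₂(H⊗F) spanned by a_{(−2)}c, one has [G_λ G] ≡ :b²: + (1−2γ²)λ²/2. -/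
open scoped BigOperators

/-- Generalized binomial coefficient `binom m j` for integer upper index `m`. -/
noncomputable def zbinom (m : ℤ) (j : ℕ) : ℂ :=
  (∏ i ∈ Finset.range j, ((m : ℂ) - (i : ℂ))) / (Nat.factorial j : ℂ)

/-- A bare-bones vertex superalgebra: `mul n a b` is the `n`-th product `a₍ₙ₎b`, `vac`
the vacuum, `T` the translation operator and `pt` the parity (of homogeneous elements).
The axioms are the vacuum and translation axioms, skew-symmetry and the Borcherds
commutator formula. -/
structure SVA (V : Type*) [AddCommGroup V] [Module ℂ V] where
  mul : ℤ → V →ₗ[ℂ] V →ₗ[ℂ] V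
  vac : V
  T : V →ₗ[ℂ] V
  pt : V → ZMod 2
  pt_vac : pt vac = 0
  pt_T : ∀ a, pt (T a) = pt a
  trunc : ∀ a b : V, ∃ N : ℕ, ∀ n : ℤ, (N : ℤ) ≤ n → mul n a b = 0
  vac_left_neg_one : ∀ a, mul (-1) vac a = a
  vac_left : ∀ a (n : ℤ), n ≠ -1 → mul n vac a = 0
  vac_right : ∀ a, mul (-1) a vac = a
  vac_right_pos : ∀ a (n : ℤ), 0 ≤ n → mul n a vac = 0
  T_eq : ∀ a, mul (-2) a vac = T a
  T_vac : T vac = 0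
  T_left : ∀ a b (n : ℤ), mul n (T a) b = (-(n : ℂ)) • mul (n - 1) a b
  T_der : ∀ a b (n : ℤ), T (mul n a b) = mul n (T a) b + mul n a (T b)
  skew : ∀ a b (n : ℤ), mul n a b =
    ((-1 : ℂ) ^ ((pt a * pt b).val)) •
      ∑ᶠ j : ℕ, ((-1 : ℂ) ^ (n + (j : ℤ) + 1)) •
        (((Nat.factorial j : ℂ))⁻¹ • (T ^ j) (mul (n + (j : ℤ)) b a))
  comm : ∀ a b c (m n : ℤ),
    mul m a (mul n b c) - ((-1 : ℂ) ^ ((pt a * pt b).val)) • mul n b (mul m a c) =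
      ∑ᶠ j : ℕ, zbinom m j • mul (m + n - (j : ℤ)) (mul (j : ℤ) a b) c

/-- `C₂(V)`: the span of all elements of the form `a₍₋₂₎c`. -/
noncomputable def SVA.C2 {V : Type*} [AddCommGroup V] [Module ℂ V] (S : SVA V) :
    Submodule ℂ V :=
  Submodule.span ℂ {x : V | ∃ a c : V, x = S.mul (-2) a c}

lemma zbinom_zero' (m : ℤ) : zbinom m 0 = 1 := by simp [zbinom]
lemma zbinom_one' (m : ℤ) : zbinom m 1 = m := by simp [zbinom]

lemma SVA.mul_zero_left' {V : Type*} [AddCommGroup V] [Module ℂ V] (S : SVA V)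
    (n : ℤ) (c : V) : S.mul n 0 c = 0 := by simp

lemma SVA.mul_zero_right' {V : Type*} [AddCommGroup V] [Module ℂ V] (S : SVA V)
    (n : ℤ) (c : V) : S.mul n c 0 = 0 := by simp

/-- Fateev–Lukyanov generator, rank 1: in `H ⊗ F` with Heisenberg field `b`
(`[b_λ b] = λ`) and free fermion `Ψ` (`[Ψ_λ Ψ] = 1`), for `G = :(γ∂ + b)Ψ:` one has
`[G_λ G] = :b²: + γ∂b + :(∂Ψ)Ψ: + (1 - 2γ²)λ²/2`; in particular,
`[G_λ G] ≡ :b²: + (1-2γ²)λ²/2` modulo `C₂(H ⊗ F)`. -/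
theorem FL_rank_one
    {V : Type*} [AddCommGroup V] [Module ℂ V] (S : SVA V)
    (γ : ℂ) (b Ψ G : V)
    (hptb : S.pt b = 0) (hptΨ : S.pt Ψ = 1)
    (hbb1 : S.mul 1 b b = S.vac) (hbb0 : S.mul 0 b b = 0)
    (hbbn : ∀ n : ℤ, 2 ≤ n → S.mul n b b = 0)
    (hΨΨ0 : S.mul 0 Ψ Ψ = S.vac)
    (hΨΨn : ∀ n : ℤ, 1 ≤ n → S.mul n Ψ Ψ = 0)
    (hbΨ : ∀ n : ℤ, 0 ≤ n → S.mul n b Ψ = 0)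
    (hΨb : ∀ n : ℤ, 0 ≤ n → S.mul n Ψ b = 0)
    (hG : G = γ • S.T Ψ + S.mul (-1) b Ψ) :
    S.mul 0 G G = S.mul (-1) b b + γ • S.T b + S.mul (-1) (S.T Ψ) Ψ ∧
    S.mul 1 G G = 0 ∧
    S.mul 2 G G = (1 - 2 * γ ^ 2) • S.vac ∧
    (∀ n : ℤ, 3 ≤ n → S.mul n G G = 0) ∧
    S.mul 0 G G - S.mul (-1) b b ∈ S.C2 := by
  classical
  subst hG
  set B := S.mul (-1) b Ψ with hBdef
  -- Ψ-products with B
  have hΨmulB : ∀ m : ℤ, S.mul m Ψ B = S.mul (-1) b (S.mul m Ψ Ψ) := by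
    intro m
    have hc := S.comm Ψ b Ψ m (-1)
    have hsupp : ∀ j : ℕ, j ≠ 0 →
        zbinom m j • S.mul (m + (-1) - (j : ℤ)) (S.mul (j : ℤ) Ψ b) Ψ = 0 := by
      intro j _
      rw [hΨb (j : ℤ) (Int.natCast_nonneg j)]
      simp
    have hc2 := hc.trans (finsum_eq_single _ 0 hsupp)
    simp only [Nat.cast_zero] at hc2
    rw [hΨb 0 le_rfl] at hc2
    simp only [hptΨ, hptb] at hc2
    have hval : ((1 : ZMod 2) * 0).val = 0 := rfl
    rw [hval, pow_zero, one_smul] at hc2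
    simp only [SVA.mul_zero_left', smul_zero] at hc2
    exact sub_eq_zero.mp hc2
  have hΨB0 : S.mul 0 Ψ B = b := by rw [hΨmulB, hΨΨ0, S.vac_right]
  have hΨBpos : ∀ m : ℤ, 1 ≤ m → S.mul m Ψ B = 0 := by
    intro m hm; rw [hΨmulB, hΨΨn m hm]; simp
  -- b-products with B
  have hbBgen : ∀ m : ℤ, 0 ≤ m → S.mul m b B = (m : ℂ) • S.mul (m - 2) S.vac Ψ := by
    intro m hm
    have hc := S.comm b b Ψ m (-1)
    have hsupp : ∀ j : ℕ, j ≠ 1 →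
        zbinom m j • S.mul (m + (-1) - (j : ℤ)) (S.mul (j : ℤ) b b) Ψ = 0 := by
      intro j hj
      rcases Nat.eq_zero_or_pos j with h0 | h1
      · subst h0; simp only [Nat.cast_zero]; rw [hbb0]; simp
      · have h2 : (2 : ℤ) ≤ (j : ℤ) := by omega
        rw [hbbn _ h2]; simp
    have hc2 := hc.trans (finsum_eq_single _ 1 hsupp)
    simp only [Nat.cast_one] at hc2
    rw [hbb1, hbΨ m hm] at hc2
    simp only [hptb] at hc2
    have hval : ((0 : ZMod 2) * 0).val = 0 := rfl
    rw [hval, pow_zero, one_smul, SVA.mul_zero_right', sub_zero, zbinom_one'] at hc2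
    have he : m + (-1) - 1 = m - 2 := by ring
    rw [he] at hc2
    exact hc2
  have hbB0 : S.mul 0 b B = 0 := by rw [hbBgen 0 le_rfl]; simp
  have hbB1 : S.mul 1 b B = Ψ := by
    rw [hbBgen 1 zero_le_one]
    norm_num [S.vac_left_neg_one]
  have hbBn : ∀ m : ℤ, 2 ≤ m → S.mul m b B = 0 := by
    intro m hm
    rw [hbBgen m (by omega), S.vac_left Ψ (m - 2) (by omega)]
    simp
  -- commutator of b past B
  have hE : ∀ (c : V) (m n : ℤ), S.mul n B (S.mul m b c) =
      S.mul m b (S.mul n B c) - (m : ℂ) • S.mul (m + n - 1) Ψ c := by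
    intro c m n
    have hc := S.comm b B c m n
    have hsupp : ∀ j : ℕ, j ≠ 1 →
        zbinom m j • S.mul (m + n - (j : ℤ)) (S.mul (j : ℤ) b B) c = 0 := by
      intro j hj
      rcases Nat.eq_zero_or_pos j with h0 | h1
      · subst h0; simp only [Nat.cast_zero]; rw [hbB0]; simp
      · rw [hbBn (j : ℤ) (by omega)]; simp
    have hc2 := hc.trans (finsum_eq_single _ 1 hsupp)
    simp only [Nat.cast_one] at hc2
    rw [hbB1, zbinom_one', hptb] at hc2
    have hval : ∀ x : ZMod 2, ((0 : ZMod 2) * x).val = 0 := by decide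
    rw [hval, pow_zero, one_smul] at hc2
    rw [eq_sub_iff_add_eq, add_comm]
    exact (sub_eq_iff_eq_add.mp hc2).symm
  -- commutator of Ψ past B (with unknown sign σ)
  set σ : ℂ := (-1 : ℂ) ^ ((S.pt Ψ * S.pt B).val) with hσdef
  have hσne : σ ≠ 0 := by rw [hσdef]; exact pow_ne_zero _ (by norm_num)
  have hF : ∀ (c : V) (m n : ℤ),
      S.mul m Ψ (S.mul n B c) - σ • S.mul n B (S.mul m Ψ c) = S.mul (m + n) b c := by
    intro c m n
    have hc := S.comm Ψ B c m n
    have hsupp : ∀ j : ℕ, j ≠ 0 →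
        zbinom m j • S.mul (m + n - (j : ℤ)) (S.mul (j : ℤ) Ψ B) c = 0 := by
      intro j hj
      rw [hΨBpos (j : ℤ) (by omega)]; simp
    have hc2 := hc.trans (finsum_eq_single _ 0 hsupp)
    simp only [Nat.cast_zero] at hc2
    rw [hΨB0, zbinom_zero', one_smul, sub_zero] at hc2
    exact hc2
  have hBΨpos : ∀ n : ℤ, 1 ≤ n → S.mul n B Ψ = 0 := by
    intro n hn
    have h := hF S.vac (-1) n
    rw [S.vac_right_pos B n (by omega), S.vac_right Ψ,
      S.vac_right_pos b (-1 + n) (by omega), SVA.mul_zero_right', zero_sub,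
      neg_eq_zero] at h
    exact (smul_eq_zero.mp h).resolve_left hσne
  have hBΨ0 : σ • S.mul 0 B Ψ = -b := by
    have h := hF S.vac (-1) 0
    rw [S.vac_right_pos B 0 le_rfl, S.vac_right Ψ, SVA.mul_zero_right', zero_sub] at h
    norm_num at h
    rw [S.vac_right b] at h
    rw [← h]
    abel
  have hBT0 : σ • S.mul 0 B (S.T Ψ) = -(S.T b) := by
    have h := hF S.vac (-2) 0
    rw [S.vac_right_pos B 0 le_rfl, S.T_eq Ψ, SVA.mul_zero_right', zero_sub] at h
    norm_num at h
    rw [S.T_eq b] at h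
    rw [← h]
    abel
  have hBT1 : σ • S.mul 1 B (S.T Ψ) = -b := by
    have h := hF S.vac (-2) 1
    rw [S.vac_right_pos B 1 zero_le_one, S.T_eq Ψ, SVA.mul_zero_right', zero_sub] at h
    norm_num at h
    rw [S.vac_right b] at h
    rw [← h]
    abel
  have hBTn : ∀ n : ℤ, 2 ≤ n → S.mul n B (S.T Ψ) = 0 := by
    intro n hn
    have h := hF S.vac (-2) n
    rw [S.vac_right_pos B n (by omega), S.T_eq Ψ, SVA.mul_zero_right',
      S.vac_right_pos b (-2 + n) (by omega), zero_sub, neg_eq_zero] at h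
    exact (smul_eq_zero.mp h).resolve_left hσne
  -- B with B
  have hBB : ∀ n : ℤ, S.mul n B B = S.mul (-1) b (S.mul n B Ψ) + S.mul (n - 2) Ψ Ψ := by
    intro n
    have h := hE Ψ (-1) n
    rw [← hBdef] at h
    have he : (-1 : ℤ) + n - 1 = n - 2 := by ring
    rw [he] at h
    rw [h]
    push_cast
    rw [neg_one_smul]
    abel
  have hΨΨm1 : S.mul (-1) Ψ Ψ = 0 := by
    have hs := S.skew Ψ Ψ (-1)
    have hsupp : ∀ j : ℕ, j ≠ 0 →
        ((-1 : ℂ) ^ ((-1 : ℤ) + (j : ℤ) + 1)) •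
          (((Nat.factorial j : ℂ))⁻¹ • (S.T ^ j) (S.mul ((-1 : ℤ) + (j : ℤ)) Ψ Ψ)) = 0 := by
      intro j hj
      rcases eq_or_ne j 1 with h1 | h1
      · subst h1
        norm_num [hΨΨ0, S.T_vac]
      · rw [hΨΨn ((-1 : ℤ) + (j : ℤ)) (by omega)]
        simp
    rw [finsum_eq_single _ 0 hsupp, hptΨ] at hs
    have hval : ((1 : ZMod 2) * 1).val = 1 := rfl
    rw [hval, pow_one] at hs
    norm_num at hs
    have h2 : (2 : ℂ) • S.mul (-1) Ψ Ψ = 0 := by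
      rw [two_smul]
      nth_rewrite 1 [hs]
      exact neg_add_cancel _
    have := smul_eq_zero.mp h2
    simpa using this.resolve_left (by norm_num)
  have hBB1 : S.mul 1 B B = 0 := by
    rw [hBB 1, hBΨpos 1 le_rfl, SVA.mul_zero_right']
    norm_num [hΨΨm1]
  have hBB2 : S.mul 2 B B = S.vac := by
    rw [hBB 2, hBΨpos 2 (by norm_num), SVA.mul_zero_right']
    norm_num [hΨΨ0]
  have hBBge : ∀ n : ℤ, 3 ≤ n → S.mul n B B = 0 := by
    intro n hn
    rw [hBB n, hBΨpos n (by omega), hΨΨn (n - 2) (by omega), SVA.mul_zero_right']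
    simp
  -- products of TΨ
  have hΨTΨ : ∀ k : ℤ, S.mul k Ψ (S.T Ψ) =
      S.T (S.mul k Ψ Ψ) + (k : ℂ) • S.mul (k - 1) Ψ Ψ := by
    intro k
    have h := S.T_der Ψ Ψ k
    rw [S.T_left] at h
    have h2 : S.T (S.mul k Ψ Ψ) + (k : ℂ) • S.mul (k - 1) Ψ Ψ =
        ((-(k : ℂ)) • S.mul (k - 1) Ψ Ψ + S.mul k Ψ (S.T Ψ)) + (k : ℂ) • S.mul (k - 1) Ψ Ψ := by
      rw [← h]
    rw [h2, neg_smul]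
    abel
  have hTT0 : S.mul 0 (S.T Ψ) (S.T Ψ) = 0 := by rw [S.T_left]; norm_num
  have hTT1 : S.mul 1 (S.T Ψ) (S.T Ψ) = 0 := by
    have key : S.mul 0 Ψ (S.T Ψ) = 0 := by
      rw [hΨTΨ 0, hΨΨ0, S.T_vac]; norm_num
    rw [S.T_left]
    norm_num [key]
  have hTT2 : S.mul 2 (S.T Ψ) (S.T Ψ) = (-2 : ℂ) • S.vac := by
    have key : S.mul 1 Ψ (S.T Ψ) = S.vac := by
      rw [hΨTΨ 1, hΨΨn 1 le_rfl]
      norm_num [hΨΨ0]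
    rw [S.T_left]
    norm_num [key]
  have hTTn : ∀ n : ℤ, 3 ≤ n → S.mul n (S.T Ψ) (S.T Ψ) = 0 := by
    intro n hn
    rw [S.T_left, hΨTΨ, hΨΨn (n - 1) (by omega), hΨΨn (n - 1 - 1) (by omega)]
    simp
  have hTB0 : S.mul 0 (S.T Ψ) B = 0 := by rw [S.T_left]; norm_num
  have hTB1 : S.mul 1 (S.T Ψ) B = -b := by
    rw [S.T_left]
    norm_num [hΨB0]
  have hTBn : ∀ n : ℤ, 2 ≤ n → S.mul n (S.T Ψ) B = 0 := by
    intro n hn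
    rw [S.T_left, hΨBpos (n - 1) (by omega)]
    simp
  -- expansion of G products
  have hGexp : ∀ n : ℤ, S.mul n (γ • S.T Ψ + B) (γ • S.T Ψ + B)
      = (γ * γ) • S.mul n (S.T Ψ) (S.T Ψ) + γ • S.mul n (S.T Ψ) B
        + γ • S.mul n B (S.T Ψ) + S.mul n B B := by
    intro n
    simp only [map_add, map_smul, LinearMap.add_apply, LinearMap.smul_apply, smul_add,
      smul_smul]
    abel
  -- case split on the parity of B
  have hptBcases : S.pt B = 0 ∨ S.pt B = 1 := by
    have h : ∀ x : ZMod 2, x = 0 ∨ x = 1 := by decide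
    exact h _
  rcases hptBcases with hp | hp
  · -- degenerate case: the whole space is zero
    have hs := S.skew B B 2
    have hsupp : ∀ j : ℕ, j ≠ 0 →
        ((-1 : ℂ) ^ ((2 : ℤ) + (j : ℤ) + 1)) •
          (((Nat.factorial j : ℂ))⁻¹ • (S.T ^ j) (S.mul ((2 : ℤ) + (j : ℤ)) B B)) = 0 := by
      intro j hj
      rw [hBBge ((2 : ℤ) + (j : ℤ)) (by omega)]
      simp
    rw [finsum_eq_single _ 0 hsupp, hp] at hs
    have hval : ((0 : ZMod 2) * 0).val = 0 := rfl
    rw [hval, pow_zero, one_smul] at hs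
    norm_num at hs
    rw [hBB2] at hs
    have hvac : S.vac = 0 := by
      have h2 : (2 : ℂ) • S.vac = 0 := by
        rw [two_smul]
        nth_rewrite 1 [hs]
        exact neg_add_cancel _
      have := smul_eq_zero.mp h2
      simpa using this.resolve_left (by norm_num)
    have hzero : ∀ a : V, a = 0 := by
      intro a
      rw [← S.vac_left_neg_one a, hvac]
      simp
    refine ⟨(hzero _).trans (hzero _).symm, hzero _, (hzero _).trans (hzero _).symm,
      fun n _ => hzero _, ?_⟩
    have h0 : S.mul 0 (γ • S.T Ψ + B) (γ • S.T Ψ + B) - S.mul (-1) b b = 0 := hzero _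
    rw [h0]
    exact Submodule.zero_mem _
  · -- the honest case: B is odd
    have hσ : σ = -1 := by
      rw [hσdef, hptΨ, hp]
      have hval : ((1 : ZMod 2) * 1).val = 1 := rfl
      rw [hval, pow_one]
    rw [hσ] at hBΨ0 hBT0 hBT1
    rw [neg_one_smul, neg_inj] at hBΨ0 hBT0 hBT1
    have hBB0 : S.mul 0 B B = S.mul (-1) b b + S.mul (-2) Ψ Ψ := by
      rw [hBB 0, hBΨ0]
      norm_num
    have g0 : S.mul 0 (γ • S.T Ψ + B) (γ • S.T Ψ + B) =
        S.mul (-1) b b + γ • S.T b + S.mul (-1) (S.T Ψ) Ψ := by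
      rw [hGexp 0, hTT0, hTB0, hBT0, hBB0, S.T_left]
      norm_num
      abel
    refine ⟨g0, ?_, ?_, ?_, ?_⟩
    · rw [hGexp 1, hTT1, hTB1, hBT1, hBB1]
      simp
    · rw [hGexp 2, hTT2, hTBn 2 le_rfl, hBTn 2 le_rfl, hBB2, smul_smul]
      have hc : γ * γ * (-2 : ℂ) = -(2 * γ ^ 2) := by ring
      rw [hc]
      rw [sub_smul, one_smul, neg_smul]
      simp
      abel
    · intro n hn
      rw [hGexp n, hTTn n hn, hTBn n (by omega), hBTn n (by omega), hBBge n hn]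
      simp
    · have hdiff : S.mul 0 (γ • S.T Ψ + B) (γ • S.T Ψ + B) - S.mul (-1) b b
          = γ • S.mul (-2) b S.vac + S.mul (-2) Ψ Ψ := by
        rw [g0, S.T_left, ← S.T_eq b]
        norm_num
        abel
      rw [hdiff]
      exact Submodule.add_mem _
        (Submodule.smul_mem _ _ (Submodule.subset_span ⟨b, S.vac, rfl⟩))
        (Submodule.subset_span ⟨Ψ, Ψ, rfl⟩)
end

section
/- Screening invariance of the W B_n generator: with notation as in the Fateev–Lukyanov construction, let γ_± satisfy γ_+ + γ_− = γ and γ_+γ_− = −1, and define screening operators Q_i = ∫ e^{γ_+∫α_i(z)} dz for i = 1,…,n−1 and Q_n = ∫ :e^{γ_+∫α_n(z)} Ψ(z): dz, where α_i = b_i − b_{i+1} for i < n and α_n = b_n. Then Q_i · G = 0 for all i = 1,…,n, i.e. G lies in the intersection of the kernels of the screening operators. -/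
open scoped BigOperators

/-- `FLGaux S γ b Ψ n k = :(γ∂ + b_{n-k+1}) ⋯ (γ∂ + b_n)Ψ:`. -/
noncomputable def FLGaux {V : Type*} [AddCommGroup V] [Module ℂ V] (S : SVA V)
    (γ : ℂ) (b : ℕ → V) (Ψ : V) (n : ℕ) : ℕ → V
  | 0 => Ψ
  | k + 1 => γ • S.T (FLGaux S γ b Ψ n k) + S.mul (-1) (b (n - k)) (FLGaux S γ b Ψ n k)

/-- The Fateev–Lukyanov field `G = :(γ∂ + b₁) ⋯ (γ∂ + b_n)Ψ:`. -/
noncomputable def FLG {V : Type*} [AddCommGroup V] [Module ℂ V] (S : SVA V)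
    (γ : ℂ) (b : ℕ → V) (Ψ : V) (n : ℕ) : V :=
  FLGaux S γ b Ψ n n

/-- The simple roots of type `B_n` in terms of the orthonormal fields `b_i`:
`α_i = b_i − b_{i+1}` for `i < n`, `α_n = b_n`. -/
noncomputable def Brt {V : Type*} [AddCommGroup V] [Module ℂ V]
    (b : ℕ → V) (n i : ℕ) : V :=
  if i = n then b n else b i - b (i + 1)


/-!
Each factor `γ∂ + b_l` of `G` is passed by a screening field `a` through the commutator formula
`a₍₀₎(γ∂x + :b_l x:) = γ∂(a₍₀₎x) + :b_l (a₍₀₎x): + :(a₍₀₎b_l) x:`, and `a₍₀₎b_l` is proportional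
to `(b_l|α_i) a`. For a long root `α_i` the factors with `l ∉ {i, i+1}` therefore commute with
`a₍₀₎`, the innermost ones are annihilated, and on the pair `(γ∂ + b_i)(γ∂ + b_{i+1})` the two
surviving terms combine to `γ₊((γ - γ₊)γ₊ + 1) :α_i :a x:: = 0`, because
`(γ - γ₊)γ₊ = γ₋γ₊ = -1`. For the short root the same cancellation happens on the single factor
`γ∂ + b_n` acting on `Ψ`, where `:e^{γ₊∫α_n}Ψ:₍₀₎ Ψ` and `:e^{γ₊∫α_n}Ψ:₍₋₁₎ Ψ` are read off from
`[Ψ_λ Ψ] = 1` by skew-symmetry.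
-/

namespace SVA

variable {V : Type*} [AddCommGroup V] [Module ℂ V] (S : SVA V)

noncomputable def sign (a b : V) : ℂ := (-1) ^ (S.pt a * S.pt b).val

/-- `[a_λ x] = y`: the λ-bracket of `a` and `x` is the constant `y`. -/
def LambdaBracketEq (a x y : V) : Prop :=
  S.mul 0 a x = y ∧ ∀ m : ℤ, 1 ≤ m → S.mul m a x = 0

variable {S} {a c c' s x y z Ψ : V}

lemma sign_eq_one (h : S.pt a * S.pt x = 0) : S.sign a x = 1 := by
  simp [sign, h]

lemma mul_T_right (m : ℤ) (a x : V) :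
    S.mul m a (S.T x) = S.T (S.mul m a x) + (m : ℂ) • S.mul (m - 1) a x := by
  rw [S.T_der, S.T_left]
  module

lemma mul_neg_two (a x : V) : S.mul (-2) a x = S.mul (-1) (S.T a) x := by
  rw [S.T_left]
  norm_num

lemma lambdaBracketEq_zero_iff :
    S.LambdaBracketEq a x 0 ↔ ∀ m : ℤ, 0 ≤ m → S.mul m a x = 0 := by
  refine ⟨fun h m hm => ?_, fun h => ⟨h 0 le_rfl, fun m hm => h m (by omega)⟩⟩
  rcases hm.eq_or_lt with rfl | hm
  exacts [h.1, h.2 m hm]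

namespace LambdaBracketEq

lemma mul_eq_zero (h : S.LambdaBracketEq a x 0) {m : ℤ} (hm : 0 ≤ m) : S.mul m a x = 0 :=
  lambdaBracketEq_zero_iff.1 h m hm

lemma zero_left (x : V) : S.LambdaBracketEq 0 x 0 :=
  lambdaBracketEq_zero_iff.2 fun m _ => by simp

lemma skew (h : S.LambdaBracketEq a x y) : S.LambdaBracketEq x a (-(S.sign x a • y)) := by
  have hvan : ∀ m : ℤ, ∀ j : ℕ, 1 ≤ m + j → ((-1 : ℂ) ^ (m + (j : ℤ) + 1)) •
      (((Nat.factorial j : ℂ))⁻¹ • (S.T ^ j) (S.mul (m + j) a x)) = 0 :=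
    fun m j hmj => by rw [h.2 _ hmj]; simp
  refine ⟨?_, fun m hm => ?_⟩
  · rw [S.skew, ← sign, finsum_eq_single _ 0 fun j hj => hvan 0 j (by omega)]
    simp [h.1]
  · rw [S.skew, finsum_eq_zero_of_forall_eq_zero fun j => hvan m j (by omega), smul_zero]

lemma symm (h : S.LambdaBracketEq a x y) (hpt : S.pt x * S.pt a = 0) :
    S.LambdaBracketEq x a (-y) := by
  simpa [sign_eq_one hpt] using h.skew

lemma mul_neg_one_swap (h : S.LambdaBracketEq a x y) :
    S.mul (-1) x a = S.sign x a • (S.mul (-1) a x - S.T y) := by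
  rw [S.skew, ← sign, finsum_eq_sum_of_support_subset (s := Finset.range 2)]
  · simp [Finset.sum_range_succ, h.1, sub_eq_add_neg]
  · intro j hj
    by_contra hj2
    simp only [Finset.coe_range, Set.mem_Iio, not_lt] at hj2
    exact hj (by simp [h.2 (-1 + j) (by omega)])

end LambdaBracketEq

lemma mul_mul_neg_one (h : S.LambdaBracketEq a x y) (hx : S.pt x = 0) (m : ℤ) (z : V) :
    S.mul m a (S.mul (-1) x z) = S.mul (-1) x (S.mul m a z) + S.mul (m - 1) y z := by
  have hc := S.comm a x z m (-1)
  rw [hx, mul_zero, ZMod.val_zero, pow_zero, one_smul,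
    finsum_eq_single _ 0 fun j hj => by rw [h.2 j (by omega)]; simp] at hc
  rw [← h.1, ← sub_eq_iff_eq_add', hc]
  simp [zbinom, sub_eq_add_neg]

lemma mul_neg_one_self_eq_zero_of_odd (hΨ : S.pt Ψ = 1) (h : S.LambdaBracketEq Ψ Ψ y)
    (hy : S.T y = 0) : S.mul (-1) Ψ Ψ = 0 := by
  have hswap := h.mul_neg_one_swap
  rw [hy, sub_zero, sign, hΨ, mul_one, ZMod.val_one, pow_one, neg_one_smul,
    eq_neg_iff_add_eq_zero, ← two_smul ℂ] at hswap
  exact (smul_eq_zero.1 hswap).resolve_left two_ne_zero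

lemma LambdaBracketEq.mul_neg_one (has : S.LambdaBracketEq a s y)
    (haΨ : S.LambdaBracketEq a Ψ z) (hyΨ : S.LambdaBracketEq y Ψ 0) (hs : S.pt s = 0) :
    S.LambdaBracketEq a (S.mul (-1) s Ψ) (S.mul (-1) s z + S.mul (-1) y Ψ) :=
  ⟨by rw [mul_mul_neg_one has hs, haΨ.1]; norm_num,
    fun m hm => by rw [mul_mul_neg_one has hs, haΨ.2 m hm, hyΨ.mul_eq_zero (by omega)]; simp⟩

lemma mul_factor (h : S.LambdaBracketEq a c y) (hc : S.pt c = 0) (γ : ℂ) (m : ℤ) (x : V) :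
    S.mul m a (γ • S.T x + S.mul (-1) c x) =
      γ • S.T (S.mul m a x) + (γ * m) • S.mul (m - 1) a x + S.mul (-1) c (S.mul m a x)
        + S.mul (m - 1) y x := by
  rw [map_add, map_smul, mul_T_right, mul_mul_neg_one h hc]
  module

lemma mul_zero_factor (h : S.LambdaBracketEq a c y) (hc : S.pt c = 0) (γ : ℂ) (x : V) :
    S.mul 0 a (γ • S.T x + S.mul (-1) c x) =
      γ • S.T (S.mul 0 a x) + S.mul (-1) c (S.mul 0 a x) + S.mul (-1) y x := by
  simpa using mul_factor h hc γ 0 x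

lemma LambdaBracketEq.factor (h : S.LambdaBracketEq a c 0) (hc : S.pt c = 0)
    (hx : S.LambdaBracketEq a x 0) (γ : ℂ) :
    S.LambdaBracketEq a (γ • S.T x + S.mul (-1) c x) 0 := by
  refine lambdaBracketEq_zero_iff.2 fun m hm => ?_
  rw [mul_factor h hc, hx.mul_eq_zero hm]
  rcases hm.eq_or_lt with rfl | hm
  · simp
  · simp [hx.mul_eq_zero (m := m - 1) (by omega)]

lemma mul_zero_factor_factor_eq_zero {γ γp : ℂ} (hγ : γ * γp - γp * γp + 1 = 0)
    (ha : S.pt a = 0) (hc : S.pt c = 0) (hc' : S.pt c' = 0)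
    (hca : S.LambdaBracketEq c a (γp • a)) (hc'a : S.LambdaBracketEq c' a ((-γp) • a))
    (hTa : S.T a = γp • (S.mul (-1) c a - S.mul (-1) c' a))
    (hax : S.LambdaBracketEq a x 0) (hcx : S.LambdaBracketEq c x 0)
    (hc'x : S.LambdaBracketEq c' x 0) :
    S.mul 0 a (γ • S.T (γ • S.T x + S.mul (-1) c' x)
      + S.mul (-1) c (γ • S.T x + S.mul (-1) c' x)) = 0 := by
  have hac : S.LambdaBracketEq a c (-(γp • a)) := hca.symm (by rw [ha, zero_mul])
  have hac' : S.LambdaBracketEq a c' (γp • a) := by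
    simpa using hc'a.symm (by rw [ha, zero_mul])
  have hxa : S.LambdaBracketEq x a 0 := by simpa using hax.symm (by rw [ha, mul_zero])
  have hxc : S.LambdaBracketEq x c 0 := by simpa using hcx.symm (by rw [hc, mul_zero])
  have hxc' : S.LambdaBracketEq x c' 0 := by simpa using hc'x.symm (by rw [hc', mul_zero])
  set u := S.mul (-1) a x
  have hxu : S.mul (-1) x a = u := by
    rw [hax.mul_neg_one_swap, sign_eq_one (by rw [ha, mul_zero])]
    simp [u]
  have hxTa : ∀ m, S.mul m x (S.T a) = γp • (S.mul (-1) c (S.mul m x a)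
      - S.mul (-1) c' (S.mul m x a)) := fun m => by
    rw [hTa, map_smul, map_sub, mul_mul_neg_one hxc hc, mul_mul_neg_one hxc' hc']
    simp
  -- `x` commutes with `c` and `c'`, so skew-symmetry turns `(∂a)₍₋₁₎x` into `γ₊ :(c - c') :a x::`.
  have hTax : S.mul (-1) (S.T a) x = γp • (S.mul (-1) c u - S.mul (-1) c' u) := by
    have hxTa0 : S.LambdaBracketEq x (S.T a) 0 :=
      lambdaBracketEq_zero_iff.2 fun m hm => by rw [hxTa, hxa.mul_eq_zero hm]; simp
    rw [hxTa0.mul_neg_one_swap, sign_eq_one (by rw [S.pt_T, ha, zero_mul]), hxTa, hxu]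
    simp
  have h1 : S.mul 0 a (γ • S.T x + S.mul (-1) c' x) = γp • u := by
    rw [mul_zero_factor hac' hc', hax.1]
    simp [u]
  have h2 : S.mul (-1) a (S.mul (-1) c' x) = S.mul (-1) c' u + γp • S.mul (-1) (S.T a) x := by
    rw [mul_mul_neg_one hac' hc', ← mul_neg_two]
    simp [u]
  have hTu : S.T u = S.mul (-1) (S.T a) x + S.mul (-1) a (S.T x) := S.T_der a x (-1)
  rw [mul_zero_factor hac hc, h1]
  simp only [map_smul, map_add, map_neg, LinearMap.smul_apply, LinearMap.neg_apply, hTu, h2, hTax]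
  linear_combination (norm := module) hγ • (γp • (S.mul (-1) c u - S.mul (-1) c' u))

end SVA

section FLG

open SVA

variable {V : Type*} [AddCommGroup V] [Module ℂ V] {S : SVA V} {γ : ℂ} {b : ℕ → V} {Ψ : V}
  {n : ℕ} {a s : V}

lemma lambdaBracketEq_FLGaux (hptb : ∀ l, S.pt (b l) = 0) (hΨ : S.LambdaBracketEq a Ψ 0)
    {k : ℕ} (hb : ∀ t < k, S.LambdaBracketEq a (b (n - t)) 0) :
    S.LambdaBracketEq a (FLGaux S γ b Ψ n k) 0 := by
  induction k with
  | zero => exact hΨ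
  | succ k ih => exact (hb k k.lt_succ_self).factor (hptb _) (ih fun t ht => hb t (by omega)) γ

lemma mul_zero_FLGaux_eq_zero (hptb : ∀ l, S.pt (b l) = 0) {k₀ k : ℕ} (hk : k₀ ≤ k)
    (h₀ : S.mul 0 a (FLGaux S γ b Ψ n k₀) = 0)
    (hb : ∀ t, k₀ ≤ t → t < k → S.LambdaBracketEq a (b (n - t)) 0) :
    S.mul 0 a (FLGaux S γ b Ψ n k) = 0 := by
  induction k, hk using Nat.le_induction with
  | base => exact h₀
  | succ k hk ih =>
    rw [FLGaux, mul_zero_factor (hb k hk k.lt_succ_self) (hptb _),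
      ih fun t h₁ h₂ => hb t h₁ (by omega)]
    simp

theorem mul_zero_FLG_eq_zero_of_long_root {γp : ℂ} (hγ : γ * γp - γp * γp + 1 = 0) {i : ℕ}
    (hi : 1 ≤ i) (hin : i + 1 ≤ n) (hptb : ∀ l, S.pt (b l) = 0) (hpta : S.pt a = 0)
    (hbb : ∀ l l', l ≠ l' → S.LambdaBracketEq (b l) (b l') 0)
    (hbΨ : ∀ l, S.LambdaBracketEq (b l) Ψ 0) (hΨa : S.LambdaBracketEq Ψ a 0)
    (hba : ∀ l, 1 ≤ l → l ≤ n → l ≠ i → l ≠ i + 1 → S.LambdaBracketEq (b l) a 0)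
    (hbia : S.LambdaBracketEq (b i) a (γp • a))
    (hbi1a : S.LambdaBracketEq (b (i + 1)) a ((-γp) • a))
    (hTa : S.T a = γp • (S.mul (-1) (b i) a - S.mul (-1) (b (i + 1)) a)) :
    S.mul 0 a (FLG S γ b Ψ n) = 0 := by
  have hab : ∀ l, 1 ≤ l → l ≤ n → l ≠ i → l ≠ i + 1 → S.LambdaBracketEq a (b l) 0 :=
    fun l h₁ h₂ h₃ h₄ => by simpa using (hba l h₁ h₂ h₃ h₄).symm (by rw [hpta, hptb, mul_zero])
  have haΨ : S.LambdaBracketEq a Ψ 0 := by simpa using hΨa.symm (by rw [hpta, zero_mul])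
  set d := n - (i + 1)
  have hpair : S.mul 0 a (FLGaux S γ b Ψ n (d + 1 + 1)) = 0 := by
    rw [FLGaux, FLGaux, show n - (d + 1) = i by omega, show n - d = i + 1 by omega]
    exact mul_zero_factor_factor_eq_zero hγ hpta (hptb _) (hptb _) hbia hbi1a hTa
      (lambdaBracketEq_FLGaux hptb haΨ fun t _ =>
        hab _ (by omega) (by omega) (by omega) (by omega))
      (lambdaBracketEq_FLGaux hptb (hbΨ _) fun t _ => hbb _ _ (by omega))
      (lambdaBracketEq_FLGaux hptb (hbΨ _) fun t _ => hbb _ _ (by omega))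
  exact mul_zero_FLGaux_eq_zero hptb (by omega) hpair
    fun t _ _ => hab _ (by omega) (by omega) (by omega) (by omega)

theorem mul_zero_FLG_eq_zero_of_short_root {γp : ℂ} (hγ : γ * γp - γp * γp + 1 = 0)
    (hn : 1 ≤ n) (hptb : ∀ l, S.pt (b l) = 0) (hpts : S.pt s = 0) (hptΨ : S.pt Ψ = 1)
    (hbΨ : ∀ l, S.LambdaBracketEq (b l) Ψ 0) (hΨΨ : S.LambdaBracketEq Ψ Ψ S.vac)
    (hΨs : S.LambdaBracketEq Ψ s 0) (hbs : ∀ l, 1 ≤ l → l < n → S.LambdaBracketEq (b l) s 0)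
    (hbns : S.LambdaBracketEq (b n) s (γp • s)) (hTs : S.T s = γp • S.mul (-1) (b n) s) :
    S.mul 0 (S.mul (-1) s Ψ) (FLG S γ b Ψ n) = 0 := by
  set W := S.mul (-1) s Ψ
  have hsΨ : S.LambdaBracketEq s Ψ 0 := by simpa using hΨs.symm (by rw [hpts, zero_mul])
  have hΨW : S.LambdaBracketEq Ψ W s := by
    simpa [S.vac_right] using hΨs.mul_neg_one hΨΨ (.zero_left Ψ) hpts
  have hΨW' : S.mul (-1) Ψ W = 0 := by
    rw [mul_mul_neg_one hΨs hpts, mul_neg_one_self_eq_zero_of_odd hptΨ hΨΨ S.T_vac]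
    simp
  have hWΨ : S.mul (-1) W Ψ = -(S.sign W Ψ • S.T s) := by
    rw [hΨW.mul_neg_one_swap, hΨW', zero_sub, smul_neg]
  have hbW : ∀ l, 1 ≤ l → l < n → S.LambdaBracketEq W (b l) 0 := fun l h₁ h₂ => by
    simpa using ((hbs l h₁ h₂).mul_neg_one (hbΨ l) (.zero_left Ψ) hpts).symm
      (by rw [hptb, mul_zero])
  have hWbn : S.LambdaBracketEq W (b n) (-(γp • W)) := by
    have hγpsΨ : S.LambdaBracketEq (γp • s) Ψ 0 :=
      lambdaBracketEq_zero_iff.2 fun m hm => by simp [hsΨ.mul_eq_zero hm]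
    simpa [W] using (hbns.mul_neg_one (hbΨ n) hγpsΨ hpts).symm (by rw [hptb, mul_zero])
  have hW₁ : S.mul 0 W (FLGaux S γ b Ψ n 1) = 0 := by
    rw [FLGaux, FLGaux, Nat.sub_zero, mul_zero_factor hWbn (hptb n), hΨW.skew.1]
    simp only [map_neg, map_smul, LinearMap.neg_apply, LinearMap.smul_apply, hWΨ, hTs]
    linear_combination (norm := module) hγ • (-(S.sign W Ψ • S.mul (-1) (b n) s))
  exact mul_zero_FLGaux_eq_zero hptb hn hW₁ fun t h₁ h₂ => hbW _ (by omega) (by omega)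

end FLG

theorem WBn_screening_kills_G_general
    {V : Type*} [AddCommGroup V] [Module ℂ V] (S : SVA V)
    (n : ℕ) (hn : 1 ≤ n) (γ γp γm : ℂ) (b : ℕ → V) (Ψ : V) (Sα : ℕ → V)
    (hγ : γp + γm = γ) (hγ2 : γp * γm = -1)
    (hptb : ∀ i, S.pt (b i) = 0) (hptΨ : S.pt Ψ = 1) (hptS : ∀ i, S.pt (Sα i) = 0)
    (hbb1 : ∀ i j, S.mul 1 (b i) (b j) = (if i = j then (1 : ℂ) else 0) • S.vac)
    (hbb0 : ∀ i j, S.mul 0 (b i) (b j) = 0)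
    (hbbn : ∀ i j, ∀ m : ℤ, 2 ≤ m → S.mul m (b i) (b j) = 0)
    (hΨΨ0 : S.mul 0 Ψ Ψ = S.vac)
    (hΨΨn : ∀ m : ℤ, 1 ≤ m → S.mul m Ψ Ψ = 0)
    (hbΨ : ∀ i, ∀ m : ℤ, 0 ≤ m → S.mul m (b i) Ψ = 0)
    -- `∂ Sα_i = γ₊ :α_i Sα_i:`
    (hTS : ∀ i, 1 ≤ i → i ≤ n → S.T (Sα i) = γp • S.mul (-1) (Brt b n i) (Sα i))
    -- `[b_j λ Sα_i] = γ₊ (b_j | α_i) Sα_i` with `(b_j|α_i) = δ_{ji} − δ_{j,i+1}`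
    (hbS0 : ∀ i j, 1 ≤ i → i ≤ n → 1 ≤ j → j ≤ n →
      S.mul 0 (b j) (Sα i)
        = (γp * ((if j = i then (1 : ℂ) else 0)
            - (if j = i + 1 ∧ i ≠ n then (1 : ℂ) else 0))) • Sα i)
    (hbSpos : ∀ i j, ∀ m : ℤ, 1 ≤ m → S.mul m (b j) (Sα i) = 0)
    (hΨS : ∀ i, ∀ m : ℤ, 0 ≤ m → S.mul m Ψ (Sα i) = 0) :
    (∀ i, 1 ≤ i → i + 1 ≤ n → S.mul 0 (Sα i) (FLG S γ b Ψ n) = 0) ∧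
    S.mul 0 (S.mul (-1) (Sα n) Ψ) (FLG S γ b Ψ n) = 0 := by
  have hγp : γ * γp - γp * γp + 1 = 0 := by linear_combination (-γp) * hγ + hγ2
  have hbb : ∀ l l', l ≠ l' → S.LambdaBracketEq (b l) (b l') 0 := fun l l' hl =>
    ⟨hbb0 l l', fun m hm => by
      rcases hm.eq_or_lt with rfl | hm
      · simp [hbb1, hl]
      · exact hbbn l l' m hm⟩
  have hbΨ' l : S.LambdaBracketEq (b l) Ψ 0 := SVA.lambdaBracketEq_zero_iff.2 (hbΨ l)
  have hΨS' i : S.LambdaBracketEq Ψ (Sα i) 0 := SVA.lambdaBracketEq_zero_iff.2 (hΨS i)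
  have hbS i l (h₁ : 1 ≤ i) (h₂ : i ≤ n) (h₃ : 1 ≤ l) (h₄ : l ≤ n) :=
    (⟨hbS0 i l h₁ h₂ h₃ h₄, hbSpos i l⟩ : S.LambdaBracketEq (b l) (Sα i) _)
  refine ⟨fun i hi hin => ?_, ?_⟩
  · have hi' : i ≠ n := by omega
    refine mul_zero_FLG_eq_zero_of_long_root hγp hi hin hptb (hptS i) hbb hbΨ' (hΨS' i)
      (fun l h₁ h₂ h₃ h₄ => by
        simpa [SVA.LambdaBracketEq, h₃, h₄] using hbS i l hi (by omega) h₁ h₂)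
      (by simpa [SVA.LambdaBracketEq] using hbS i i hi (by omega) hi (by omega))
      (by simpa [SVA.LambdaBracketEq, hi'] using hbS i (i + 1) hi (by omega) (by omega) hin) ?_
    rw [hTS i hi (by omega), Brt, if_neg (by omega), map_sub, LinearMap.sub_apply, smul_sub]
  · refine mul_zero_FLG_eq_zero_of_short_root hγp hn hptb (hptS n) hptΨ hbΨ' ⟨hΨΨ0, hΨΨn⟩
      (hΨS' n)
      (fun l h₁ h₂ => by simpa [SVA.LambdaBracketEq, h₂.ne] using hbS n l hn le_rfl h₁ h₂.le)
      (by simpa [SVA.LambdaBracketEq] using hbS n n hn le_rfl hn le_rfl) ?_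
    rw [hTS n hn le_rfl, Brt, if_pos rfl]

/-- screening invariance of the `WB_n` generator: let `γ₊ + γ₋ = γ`,
`γ₊γ₋ = −1`, let `Sα i` be the screening vertex operator `e^{γ₊∫α_i(z)}` (characterized
by `∂Sα_i = γ₊ :α_i Sα_i:`, `[b_j λ Sα_i] = γ₊ (b_j|α_i) Sα_i` and `[Ψ_λ Sα_i] = 0`),
and let `G = :(γ∂+b₁)⋯(γ∂+b_n)Ψ:`.  Then the screening operators
`Q_i = ∫ Sα_i dz` (`i < n`) and `Q_n = ∫ :Sα_n Ψ: dz` kill `G`: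
`(Sα_i)₍₀₎ G = 0` and `(:Sα_n Ψ:)₍₀₎ G = 0`. -/
theorem WBn_screening_kills_G
    {V : Type*} [AddCommGroup V] [Module ℂ V] (S : SVA V)
    (n : ℕ) (hn : 1 ≤ n) (γ γp γm : ℂ) (b : ℕ → V) (Ψ : V) (Sα : ℕ → V)
    (hγ : γp + γm = γ) (hγ2 : γp * γm = -1)
    (hptb : ∀ i, S.pt (b i) = 0) (hptΨ : S.pt Ψ = 1) (hptS : ∀ i, S.pt (Sα i) = 0)
    (hbb1 : ∀ i j, S.mul 1 (b i) (b j) = (if i = j then (1 : ℂ) else 0) • S.vac)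
    (hbb0 : ∀ i j, S.mul 0 (b i) (b j) = 0)
    (hbbn : ∀ i j, ∀ m : ℤ, 2 ≤ m → S.mul m (b i) (b j) = 0)
    (hΨΨ0 : S.mul 0 Ψ Ψ = S.vac)
    (hΨΨn : ∀ m : ℤ, 1 ≤ m → S.mul m Ψ Ψ = 0)
    (hbΨ : ∀ i, ∀ m : ℤ, 0 ≤ m → S.mul m (b i) Ψ = 0)
    (hΨb : ∀ i, ∀ m : ℤ, 0 ≤ m → S.mul m Ψ (b i) = 0)
    -- `∂ Sα_i = γ₊ :α_i Sα_i:`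
    (hTS : ∀ i, 1 ≤ i → i ≤ n → S.T (Sα i) = γp • S.mul (-1) (Brt b n i) (Sα i))
    -- `[b_j λ Sα_i] = γ₊ (b_j | α_i) Sα_i` with `(b_j|α_i) = δ_{ji} − δ_{j,i+1}`
    (hbS0 : ∀ i j, 1 ≤ i → i ≤ n → 1 ≤ j → j ≤ n →
      S.mul 0 (b j) (Sα i)
        = (γp * ((if j = i then (1 : ℂ) else 0)
            - (if j = i + 1 ∧ i ≠ n then (1 : ℂ) else 0))) • Sα i)
    (hbSpos : ∀ i j, ∀ m : ℤ, 1 ≤ m → S.mul m (b j) (Sα i) = 0)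
    (hΨS : ∀ i, ∀ m : ℤ, 0 ≤ m → S.mul m Ψ (Sα i) = 0) :
    (∀ i, 1 ≤ i → i + 1 ≤ n → S.mul 0 (Sα i) (FLG S γ b Ψ n) = 0) ∧
    S.mul 0 (S.mul (-1) (Sα n) Ψ) (FLG S γ b Ψ n) = 0 :=
  WBn_screening_kills_G_general S n hn γ γp γm b Ψ Sα hγ hγ2 hptb hptΨ hptS hbb1 hbb0 hbbn hΨΨ0 hΨΨn
    hbΨ hTS hbS0 hbSpos hΨS
end

section
/- The centralizer of a regular nilpotent element in osp(1,2n): let g = osp(1,2n) with even part sp(2n), f a regular nilpotent element of the even part, and Γ the Dynkin grading. Then g^f = g_ev^f ⊕ g_od^f where g_ev^f has dimension n with basis vectors u_i ∈ g_{−(2i−1)} (the exponents of sp(2n)), and g_od^f is one-dimensional, spanned by the lowest root vector e_{−β_1−⋯−β_n} which lies in degree −(n − 1/2). -/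
open scoped BigOperators Matrix

namespace OSP

/-- Parity of the index: index `0` spans the 1-dimensional even superspace, indices
`1, …, 2n` span the `2n`-dimensional odd superspace. -/
def pr (n : ℕ) (i : Fin (2 * n + 1)) : ZMod 2 := if (i : ℕ) = 0 then 0 else 1

/-- The supersymmetric bilinear form of `ℂ^{1|2n}`: symmetric (`1`) on the even line,
symplectic (antidiagonal with alternating signs) on the odd part. -/
noncomputable def Bm (n : ℕ) : Matrix (Fin (2 * n + 1)) (Fin (2 * n + 1)) ℂ :=
  fun i j =>
    if (i : ℕ) = 0 ∧ (j : ℕ) = 0 then 1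
    else if 1 ≤ (i : ℕ) ∧ 1 ≤ (j : ℕ) ∧ (i : ℕ) + (j : ℕ) = 2 * n + 1 then
      (-1 : ℂ) ^ ((i : ℕ) + 1)
    else 0

/-- The even part of `osp(1,2n) ⊂ gl(1|2n)`: parity-preserving matrices `X` with
`(Xᵀ B)_{jl} + (B X)_{jl} = 0`. -/
noncomputable def ospEven (n : ℕ) : Submodule ℂ (Matrix (Fin (2 * n + 1)) (Fin (2 * n + 1)) ℂ) where
  carrier := {X | (∀ i j, pr n i ≠ pr n j → X i j = 0) ∧
    ∀ j l, (Xᵀ * Bm n) j l + (Bm n * X) j l = 0}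
  add_mem' := by
    rintro X Y ⟨hX1, hX2⟩ ⟨hY1, hY2⟩
    refine ⟨fun i j h => by simp [Matrix.add_apply, hX1 i j h, hY1 i j h], fun j l => ?_⟩
    simp only [Matrix.transpose_add, Matrix.add_mul, Matrix.mul_add, Matrix.add_apply]
    linear_combination hX2 j l + hY2 j l
  zero_mem' := by
    refine ⟨fun i j h => rfl, fun j l => by simp⟩
  smul_mem' := by
    rintro t X ⟨hX1, hX2⟩
    refine ⟨fun i j h => by simp [Matrix.smul_apply, hX1 i j h], fun j l => ?_⟩
    simp only [Matrix.transpose_smul, Matrix.smul_mul, Matrix.mul_smul, Matrix.smul_apply,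
      smul_eq_mul]
    linear_combination t * hX2 j l

/-- The odd part of `osp(1,2n) ⊂ gl(1|2n)`: parity-reversing matrices `X` with
`(Xᵀ B)_{jl} + (-1)^{p(j)} (B X)_{jl} = 0`. -/
noncomputable def ospOdd (n : ℕ) : Submodule ℂ (Matrix (Fin (2 * n + 1)) (Fin (2 * n + 1)) ℂ) where
  carrier := {X | (∀ i j, pr n i = pr n j → X i j = 0) ∧
    ∀ j l, (Xᵀ * Bm n) j l + (-1 : ℂ) ^ ((pr n j).val) * (Bm n * X) j l = 0}
  add_mem' := by
    rintro X Y ⟨hX1, hX2⟩ ⟨hY1, hY2⟩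
    refine ⟨fun i j h => by simp [Matrix.add_apply, hX1 i j h, hY1 i j h], fun j l => ?_⟩
    simp only [Matrix.transpose_add, Matrix.add_mul, Matrix.mul_add, Matrix.add_apply]
    linear_combination hX2 j l + hY2 j l
  zero_mem' := by
    refine ⟨fun i j h => rfl, fun j l => by simp⟩
  smul_mem' := by
    rintro t X ⟨hX1, hX2⟩
    refine ⟨fun i j h => by simp [Matrix.smul_apply, hX1 i j h], fun j l => ?_⟩
    simp only [Matrix.transpose_smul, Matrix.smul_mul, Matrix.mul_smul, Matrix.smul_apply,
      smul_eq_mul]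
    linear_combination t * hX2 j l

/-- The regular nilpotent `f = ∑_{m=1}^{2n-1} e_{m+1,m}` of the even part `sp(2n)`
(a single Jordan block on the odd superspace). -/
noncomputable def fReg (n : ℕ) : Matrix (Fin (2 * n + 1)) (Fin (2 * n + 1)) ℂ :=
  fun i j => if 2 ≤ (i : ℕ) ∧ (i : ℕ) = (j : ℕ) + 1 then 1 else 0

/-- The semisimple element `x = h/2` of the principal `sl₂`-triple: diagonal with entries
`(2n+1-2i)/2` at the odd indices `i = 1, …, 2n` and `0` at the even index. -/
noncomputable def xReg (n : ℕ) : Matrix (Fin (2 * n + 1)) (Fin (2 * n + 1)) ℂ :=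
  fun i j => if (i : ℕ) = (j : ℕ) ∧ 1 ≤ (i : ℕ) then
    (((2 * n + 1 : ℤ) - 2 * (i : ℕ) : ℤ) : ℂ) / 2 else 0

/-- `ad A` on the matrix superalgebra. -/
noncomputable def adM (n : ℕ) (A : Matrix (Fin (2 * n + 1)) (Fin (2 * n + 1)) ℂ) :
    Module.End ℂ (Matrix (Fin (2 * n + 1)) (Fin (2 * n + 1)) ℂ) :=
  LinearMap.mulLeft ℂ A - LinearMap.mulRight ℂ A


lemma sum_support {N : ℕ} (a : ℕ) (f : Fin N → ℂ)
    (hf : ∀ p : Fin N, (p : ℕ) ≠ a → f p = 0) :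
    ∑ p : Fin N, f p = if h : a < N then f ⟨a, h⟩ else 0 := by
  split_ifs with h
  · exact Finset.sum_eq_single ⟨a, h⟩
      (fun b _ hb => hf b (fun hv => hb (Fin.ext hv))) (fun hm => absurd (Finset.mem_univ _) hm)
  · exact Finset.sum_eq_zero fun p _ => hf p (fun hp => h (hp ▸ p.isLt))

lemma neg_one_pow_mod {a : ℕ} : ((-1 : ℂ)) ^ a = if a % 2 = 0 then 1 else -1 := by
  rcases Nat.even_or_odd a with h | h
  · simp [h.neg_one_pow, Nat.even_iff.mp h]
  · simp [h.neg_one_pow, Nat.odd_iff.mp h]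

/-- `E m = f^m`: entries `1` at `(j+m, j)` for `j ≥ 1`. -/
noncomputable def Em (n m : ℕ) : Matrix (Fin (2 * n + 1)) (Fin (2 * n + 1)) ℂ :=
  fun i j => if 1 ≤ (j : ℕ) ∧ (i : ℕ) = (j : ℕ) + m then 1 else 0

/-- the odd centralizer generator. -/
noncomputable def Wm (n : ℕ) : Matrix (Fin (2 * n + 1)) (Fin (2 * n + 1)) ℂ :=
  fun i j => if ((i : ℕ) = 2 * n ∧ (j : ℕ) = 0) ∨ ((i : ℕ) = 0 ∧ (j : ℕ) = 1) then 1 else 0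

variable {n : ℕ}

lemma fmul (X : Matrix (Fin (2 * n + 1)) (Fin (2 * n + 1)) ℂ) (i l : Fin (2 * n + 1)) :
    (fReg n * X) i l =
      if h : 2 ≤ (i : ℕ) then X ⟨(i : ℕ) - 1, lt_of_le_of_lt (Nat.sub_le _ _) i.isLt⟩ l
      else 0 := by
  rw [Matrix.mul_apply]
  split_ifs with h
  · rw [sum_support ((i : ℕ) - 1) _ (fun p hp => by
      have : ¬(2 ≤ (i : ℕ) ∧ (i : ℕ) = (p : ℕ) + 1) := by omega
      simp [fReg, this])]
    rw [dif_pos (lt_of_le_of_lt (Nat.sub_le _ _) i.isLt)]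
    simp only [fReg, Fin.val_mk]
    rw [if_pos (by omega), one_mul]
  · exact Finset.sum_eq_zero fun p _ => by
      have : ¬(2 ≤ (i : ℕ) ∧ (i : ℕ) = (p : ℕ) + 1) := by omega
      simp [fReg, this]

lemma mulf (X : Matrix (Fin (2 * n + 1)) (Fin (2 * n + 1)) ℂ) (i j : Fin (2 * n + 1)) :
    (X * fReg n) i j =
      if h : 1 ≤ (j : ℕ) ∧ (j : ℕ) + 1 < 2 * n + 1 then X i ⟨(j : ℕ) + 1, h.2⟩
      else 0 := by
  rw [Matrix.mul_apply]
  split_ifs with h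
  · rw [sum_support ((j : ℕ) + 1) _ (fun p hp => by
      have : ¬(2 ≤ (p : ℕ) ∧ (p : ℕ) = (j : ℕ) + 1) := by omega
      simp [fReg, this])]
    rw [dif_pos h.2]
    simp only [fReg, Fin.val_mk]
    rw [if_pos ⟨by omega, trivial⟩, mul_one]
  · exact Finset.sum_eq_zero fun p _ => by
      have hp := p.isLt
      have : ¬(2 ≤ (p : ℕ) ∧ (p : ℕ) = (j : ℕ) + 1) := by omega
      simp [fReg, this]

lemma tBmul (X : Matrix (Fin (2 * n + 1)) (Fin (2 * n + 1)) ℂ)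
    (j l : Fin (2 * n + 1)) :
    (Xᵀ * Bm n) j l =
      if h : 1 ≤ (l : ℕ) then
        (-1 : ℂ) ^ (2 * n + 1 - (l : ℕ) + 1) * X ⟨2 * n + 1 - (l : ℕ), by omega⟩ j
      else X ⟨0, by omega⟩ j := by
  rw [Matrix.mul_apply]
  split_ifs with h
  · have hl := l.isLt
    rw [sum_support (2 * n + 1 - (l : ℕ)) _ (fun p hp => by
      have h1 : ¬((p : ℕ) = 0 ∧ (l : ℕ) = 0) := by omega
      have h2 : ¬(1 ≤ (p : ℕ) ∧ 1 ≤ (l : ℕ) ∧ (p : ℕ) + (l : ℕ) = 2 * n + 1) := by omega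
      simp only [Matrix.transpose_apply, Bm]
      rw [if_neg h1, if_neg h2, mul_zero])]
    rw [dif_pos (by omega : 2 * n + 1 - (l : ℕ) < 2 * n + 1)]
    simp only [Matrix.transpose_apply, Bm, Fin.val_mk]
    rw [if_neg (by omega), if_pos (by omega)]
    ring
  · rw [sum_support 0 _ (fun p hp => by
      have h1 : ¬((p : ℕ) = 0 ∧ (l : ℕ) = 0) := by omega
      have h2 : ¬(1 ≤ (p : ℕ) ∧ 1 ≤ (l : ℕ) ∧ (p : ℕ) + (l : ℕ) = 2 * n + 1) := by omega
      simp only [Matrix.transpose_apply, Bm]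
      rw [if_neg h1, if_neg h2, mul_zero])]
    rw [dif_pos (by omega : 0 < 2 * n + 1)]
    simp only [Matrix.transpose_apply, Bm, Fin.val_mk]
    rw [if_pos ⟨trivial, by omega⟩, mul_one]

lemma Bmul (X : Matrix (Fin (2 * n + 1)) (Fin (2 * n + 1)) ℂ)
    (j l : Fin (2 * n + 1)) :
    (Bm n * X) j l =
      if h : 1 ≤ (j : ℕ) then
        (-1 : ℂ) ^ ((j : ℕ) + 1) * X ⟨2 * n + 1 - (j : ℕ), by omega⟩ l
      else X ⟨0, by omega⟩ l := by
  rw [Matrix.mul_apply]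
  split_ifs with h
  · have hj := j.isLt
    rw [sum_support (2 * n + 1 - (j : ℕ)) _ (fun p hp => by
      have h1 : ¬((j : ℕ) = 0 ∧ (p : ℕ) = 0) := by omega
      have h2 : ¬(1 ≤ (j : ℕ) ∧ 1 ≤ (p : ℕ) ∧ (j : ℕ) + (p : ℕ) = 2 * n + 1) := by omega
      simp only [Bm]
      rw [if_neg h1, if_neg h2, zero_mul])]
    rw [dif_pos (by omega : 2 * n + 1 - (j : ℕ) < 2 * n + 1)]
    simp only [Bm, Fin.val_mk]
    rw [if_neg (by omega), if_pos (by omega)]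
  · rw [sum_support 0 _ (fun p hp => by
      have h1 : ¬((j : ℕ) = 0 ∧ (p : ℕ) = 0) := by omega
      have h2 : ¬(1 ≤ (j : ℕ) ∧ 1 ≤ (p : ℕ) ∧ (j : ℕ) + (p : ℕ) = 2 * n + 1) := by omega
      simp only [Bm]
      rw [if_neg h1, if_neg h2, zero_mul])]
    rw [dif_pos (by omega : 0 < 2 * n + 1)]
    simp only [Bm, Fin.val_mk]
    rw [if_pos ⟨by omega, trivial⟩, one_mul]

lemma xmul (X : Matrix (Fin (2 * n + 1)) (Fin (2 * n + 1)) ℂ) (i l : Fin (2 * n + 1)) :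
    (xReg n * X) i l =
      (if 1 ≤ (i : ℕ) then (((2 * n + 1 : ℤ) - 2 * (i : ℕ) : ℤ) : ℂ) / 2 else 0) * X i l := by
  rw [Matrix.mul_apply]
  rw [sum_support (i : ℕ) _ (fun p hp => by
    have : ¬((i : ℕ) = (p : ℕ) ∧ 1 ≤ (i : ℕ)) := by omega
    simp [xReg, this])]
  rw [dif_pos i.isLt]
  by_cases h : 1 ≤ (i : ℕ)
  · simp [xReg, h, Fin.eta]
  · simp [xReg, h]

lemma mulx (X : Matrix (Fin (2 * n + 1)) (Fin (2 * n + 1)) ℂ) (i l : Fin (2 * n + 1)) :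
    (X * xReg n) i l =
      X i l * (if 1 ≤ (l : ℕ) then (((2 * n + 1 : ℤ) - 2 * (l : ℕ) : ℤ) : ℂ) / 2 else 0) := by
  rw [Matrix.mul_apply]
  rw [sum_support (l : ℕ) _ (fun p hp => by
    have : ¬((p : ℕ) = (l : ℕ) ∧ 1 ≤ (p : ℕ)) := by omega
    simp [xReg, this])]
  rw [dif_pos l.isLt]
  by_cases h : 1 ≤ (l : ℕ)
  · simp [xReg, h, Fin.eta]
  · simp [xReg, h]

lemma np_add {a b : ℕ} (h : (a + b) % 2 = 1) : ((-1 : ℂ)) ^ a + (-1) ^ b = 0 := by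
  rcases Nat.even_or_odd a with ha | ha
  · have hb : Odd b := Nat.odd_iff.mpr (by have := Nat.even_iff.mp ha; omega)
    rw [ha.neg_one_pow, hb.neg_one_pow]; ring
  · have hb : Even b := Nat.even_iff.mpr (by have := Nat.odd_iff.mp ha; omega)
    rw [ha.neg_one_pow, hb.neg_one_pow]; ring

lemma Em_even {m : ℕ} (hm : m % 2 = 1) : Em n m ∈ ospEven n := by
  refine ⟨fun i j h => ?_, fun j l => ?_⟩
  · simp only [Em]
    rw [if_neg]
    rintro ⟨hj, hij⟩
    exact h (by simp only [pr]; rw [if_neg (by omega), if_neg (by omega)])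
  · rw [tBmul, Bmul]
    simp only [Em, Fin.val_mk]
    split_ifs <;>
      first
        | (exfalso; omega)
        | (rw [mul_one, mul_one]; exact np_add (by omega))
        | (exact np_add (by omega))
        | norm_num

lemma Em_ker {m : ℕ} : Em n m ∈ LinearMap.ker (adM n (fReg n)) := by
  rw [LinearMap.mem_ker]
  simp only [adM, LinearMap.sub_apply, LinearMap.mulLeft_apply, LinearMap.mulRight_apply]
  rw [sub_eq_zero]
  ext i l
  rw [fmul, mulf]
  simp only [Em, Fin.val_mk]
  split_ifs <;> first | rfl | (exfalso; omega)

lemma Em_eigen {m : ℕ} (hm : 1 ≤ m) :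
    adM n (xReg n) (Em n m) = (-(m : ℂ)) • Em n m := by
  simp only [adM, LinearMap.sub_apply, LinearMap.mulLeft_apply, LinearMap.mulRight_apply]
  ext i l
  rw [Matrix.sub_apply, xmul, mulx, Matrix.smul_apply, smul_eq_mul]
  simp only [Em]
  by_cases hc : 1 ≤ (l : ℕ) ∧ (i : ℕ) = (l : ℕ) + m
  · rw [if_pos hc, if_pos (by omega : 1 ≤ (i : ℕ)), if_pos hc.1]
    have hz : ((2 * n + 1 : ℤ) - 2 * (i : ℕ)) = ((2 * n + 1 : ℤ) - 2 * (l : ℕ)) - 2 * m := by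
      omega
    rw [hz, Int.cast_sub]
    push_cast
    ring
  · rw [if_neg hc]
    ring
lemma Wm_odd (hn : 1 ≤ n) : Wm n ∈ ospOdd n := by
  refine ⟨fun i j h => ?_, fun j l => ?_⟩
  · simp only [Wm]
    rw [if_neg]
    rintro (⟨hi, hj⟩ | ⟨hi, hj⟩)
    · have h1 : pr n i = 1 := by simp only [pr]; rw [if_neg (by omega)]
      have h2 : pr n j = 0 := by simp only [pr]; rw [if_pos hj]
      rw [h1, h2] at h
      exact one_ne_zero h
    · have h1 : pr n i = 0 := by simp only [pr]; rw [if_pos hi]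
      have h2 : pr n j = 1 := by simp only [pr]; rw [if_neg (by omega)]
      rw [h1, h2] at h
      exact zero_ne_one h
  · rw [tBmul, Bmul]
    have hpr : ((pr n j).val : ℕ) = if (j : ℕ) = 0 then 0 else 1 := by
      rw [show pr n j = if (j : ℕ) = 0 then 0 else 1 from rfl]
      split_ifs <;> rfl
    rw [hpr]
    simp only [Wm, Fin.val_mk, neg_one_pow_mod]
    split_ifs <;>
      (try simp_all only [true_and, and_true, false_and, and_false, true_or, or_true, false_or,
        or_false, not_true, not_false_iff]) <;>
      first | (exfalso; omega) | norm_num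

lemma Wm_ker : Wm n ∈ LinearMap.ker (adM n (fReg n)) := by
  rw [LinearMap.mem_ker]
  simp only [adM, LinearMap.sub_apply, LinearMap.mulLeft_apply, LinearMap.mulRight_apply]
  rw [sub_eq_zero]
  ext i l
  rw [fmul, mulf]
  simp only [Wm, Fin.val_mk]
  split_ifs <;>
    (try simp_all only [true_and, and_true, false_and, and_false, true_or, or_true, false_or,
      or_false, not_true, not_false_iff]) <;>
    first | rfl | (exfalso; omega)

lemma Wm_eigen (hn : 1 ≤ n) :
    adM n (xReg n) (Wm n) = (-((2 * (n : ℂ) - 1) / 2)) • Wm n := by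
  simp only [adM, LinearMap.sub_apply, LinearMap.mulLeft_apply, LinearMap.mulRight_apply]
  ext i l
  rw [Matrix.sub_apply, xmul, mulx, Matrix.smul_apply, smul_eq_mul]
  simp only [Wm]
  by_cases hc : ((i : ℕ) = 2 * n ∧ (l : ℕ) = 0) ∨ ((i : ℕ) = 0 ∧ (l : ℕ) = 1)
  · rw [if_pos hc]
    rcases hc with ⟨hi, hl⟩ | ⟨hi, hl⟩
    · rw [if_pos (by omega : 1 ≤ (i : ℕ)), if_neg (by omega : ¬ 1 ≤ (l : ℕ))]
      have hz : ((2 * n + 1 : ℤ) - 2 * (i : ℕ)) = 1 - 2 * (n : ℤ) := by omega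
      rw [hz]
      push_cast
      ring
    · rw [if_neg (by omega : ¬ 1 ≤ (i : ℕ)), if_pos (by omega : 1 ≤ (l : ℕ))]
      have hz : ((2 * n + 1 : ℤ) - 2 * (l : ℕ)) = 2 * (n : ℤ) - 1 := by omega
      rw [hz]
      push_cast
      ring
  · rw [if_neg hc]
    ring

lemma Wm_ne (hn : 1 ≤ n) : Wm n ≠ 0 := by
  intro h
  have h2 : Wm n ⟨2 * n, by omega⟩ ⟨0, by omega⟩ = 0 := by rw [h]; rfl
  simp [Wm] at h2

lemma Em_ne {m : ℕ} (hm : m + 1 < 2 * n + 1) : Em n m ≠ 0 := by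
  intro h
  have h2 : Em n m ⟨m + 1, hm⟩ ⟨1, by omega⟩ = 0 := by rw [h]; rfl
  simp only [Em, Fin.val_mk] at h2
  rw [if_pos ⟨le_refl 1, by omega⟩] at h2
  exact one_ne_zero h2

set_option maxHeartbeats 1000000 in
lemma even_struct (hn : 1 ≤ n) (X : Matrix (Fin (2 * n + 1)) (Fin (2 * n + 1)) ℂ)
    (hX : X ∈ ospEven n ⊓ LinearMap.ker (adM n (fReg n))) :
    X = ∑ k : Fin n,
      X ⟨2 * (k : ℕ) + 2, by omega⟩ ⟨1, by omega⟩ • Em n (2 * (k : ℕ) + 1) := by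
  obtain ⟨⟨hpar, hsp⟩, hker⟩ := hX
  have hcg : ∀ {a a' b b' : ℕ} (ha : a < 2*n+1) (ha' : a' < 2*n+1) (hb : b < 2*n+1)
      (hb' : b' < 2*n+1), a = a' → b = b' → X ⟨a, ha⟩ ⟨b, hb⟩ = X ⟨a', ha'⟩ ⟨b', hb'⟩ := by
    intro a a' b b' ha ha' hb hb' h1 h2
    subst h1; subst h2; rfl
  have hcomm : fReg n * X = X * fReg n := by
    have h0 := LinearMap.mem_ker.mp hker
    simp only [adM, LinearMap.sub_apply, LinearMap.mulLeft_apply,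
      LinearMap.mulRight_apply] at h0
    exact sub_eq_zero.mp h0
  have hprz : pr n ⟨0, by omega⟩ = 0 := by
    show (if (0 : ℕ) = 0 then (0 : ZMod 2) else 1) = 0
    rw [if_pos rfl]
  have hrow0 : ∀ j : Fin (2*n+1), 1 ≤ (j : ℕ) → X ⟨0, by omega⟩ j = 0 := by
    intro j hj
    refine hpar _ _ ?_
    have e1 : pr n j = 1 := by simp only [pr]; rw [if_neg (by omega)]
    rw [hprz, e1]
    exact zero_ne_one
  have hcol0 : ∀ i : Fin (2*n+1), 1 ≤ (i : ℕ) → X i ⟨0, by omega⟩ = 0 := by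
    intro i hi
    refine hpar _ _ ?_
    have e1 : pr n i = 1 := by simp only [pr]; rw [if_neg (by omega)]
    rw [hprz, e1]
    exact one_ne_zero
  have h00 : X ⟨0, by omega⟩ ⟨0, by omega⟩ = 0 := by
    have h1 := hsp ⟨0, by omega⟩ ⟨0, by omega⟩
    rw [tBmul, Bmul, dif_neg (by simp), dif_neg (by simp)] at h1
    exact add_self_eq_zero.mp h1
  -- the commutation recursion
  have hc : ∀ (i : Fin (2*n+1)) (b : ℕ) (hb1 : 1 ≤ b) (hb2 : b + 1 < 2*n+1),
      X i ⟨b+1, hb2⟩ =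
        if h : 2 ≤ (i : ℕ) then
          X ⟨(i : ℕ) - 1, by omega⟩ ⟨b, by omega⟩ else 0 := by
    intro i b hb1 hb2
    have h1 := congrFun (congrFun hcomm i) ⟨b, by omega⟩
    rw [fmul, mulf] at h1
    rw [dif_pos (show 1 ≤ ((⟨b, by omega⟩ : Fin (2*n+1)) : ℕ) ∧
      ((⟨b, by omega⟩ : Fin (2*n+1)) : ℕ) + 1 < 2*n+1 from ⟨hb1, hb2⟩)] at h1
    rw [← h1]
  -- the structure along diagonals
  have hstr : ∀ (b : ℕ) (hb1 : 1 ≤ b), ∀ (hbN : b < 2*n+1) (i : Fin (2*n+1)),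
      X i ⟨b, hbN⟩ =
        if b ≤ (i : ℕ) then X ⟨(i : ℕ) - b + 1, by omega⟩ ⟨1, by omega⟩ else 0 := by
    intro b hb1
    induction b, hb1 using Nat.le_induction with
    | base =>
      intro hbN i
      by_cases hi : 1 ≤ (i : ℕ)
      · rw [if_pos hi]
        have he : (⟨(i : ℕ) - 1 + 1, by omega⟩ : Fin (2*n+1)) = i := Fin.ext (by simp only [Fin.val_mk]; omega)
        rw [he]
      · rw [if_neg hi]
        have he : i = ⟨0, by omega⟩ := Fin.ext (by simp only [Fin.val_mk]; omega)
        rw [he]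
        exact hrow0 _ (le_refl 1)
    | succ b hb IH =>
      intro hbN i
      rw [hc i b hb hbN]
      split_ifs with h2 h3
      · rw [IH (by omega) ⟨(i : ℕ) - 1, by omega⟩]
        rw [if_pos (by simp only [Fin.val_mk]; omega)]
        exact hcg _ _ _ _ (by simp only [Fin.val_mk]; omega) rfl
      · rw [IH (by omega) ⟨(i : ℕ) - 1, by omega⟩]
        rw [if_neg (by simp only [Fin.val_mk]; omega)]
      · exact absurd (by omega : 2 ≤ (i : ℕ)) h2
      · rfl
  -- even diagonals vanish
  have heven : ∀ (m : ℕ) (hm : m + 1 < 2*n+1), m % 2 = 0 →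
      X ⟨m + 1, hm⟩ ⟨1, by omega⟩ = 0 := by
    intro m hm hm2
    have h1 := hsp ⟨2*n - m, by omega⟩ ⟨1, by omega⟩
    rw [tBmul, Bmul] at h1
    rw [dif_pos (show 1 ≤ ((⟨1, by omega⟩ : Fin (2*n+1)) : ℕ) from le_refl 1),
      dif_pos (show 1 ≤ ((⟨2*n - m, by omega⟩ : Fin (2*n+1)) : ℕ) by
        simp only [Fin.val_mk]; omega)] at h1
    simp only [Fin.val_mk] at h1
    have e1 : X ⟨2*n+1-1, by omega⟩ ⟨2*n-m, by omega⟩ = X ⟨m+1, hm⟩ ⟨1, by omega⟩ := by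
      rw [hstr (2*n-m) (by omega) (by omega)]
      simp only [Fin.val_mk]
      rw [if_pos (by omega)]
      exact hcg _ _ _ _ (by omega) rfl
    have e2 : X ⟨2*n+1-(2*n-m), by omega⟩ ⟨1, by omega⟩ = X ⟨m+1, hm⟩ ⟨1, by omega⟩ :=
      hcg _ _ _ _ (by omega) rfl
    have p1 : ((-1 : ℂ)) ^ (2*n+1-1+1) = -1 := by rw [neg_one_pow_mod, if_neg (by omega)]
    have p2 : ((-1 : ℂ)) ^ (2*n-m+1) = -1 := by rw [neg_one_pow_mod, if_neg (by omega)]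
    linear_combination (-1/2 : ℂ) * h1
      + (X ⟨2*n+1-1, by omega⟩ ⟨2*n-m, by omega⟩ / 2) * p1
      + (X ⟨2*n+1-(2*n-m), by omega⟩ ⟨1, by omega⟩ / 2) * p2
      - (1/2 : ℂ) * e1 - (1/2 : ℂ) * e2
  -- assemble
  ext i j
  rw [Matrix.sum_apply]
  by_cases hj : 1 ≤ (j : ℕ)
  · by_cases hij : (j : ℕ) ≤ (i : ℕ) ∧ ((i : ℕ) - (j : ℕ)) % 2 = 1
    · -- the unique diagonal
      obtain ⟨hle, hodd⟩ := hij
      have hk : ((i : ℕ) - (j : ℕ) - 1) / 2 < n := by omega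
      rw [sum_support (((i : ℕ) - (j : ℕ) - 1) / 2) _ (fun p hp => by
        simp only [Matrix.smul_apply, Em, smul_eq_mul]
        rw [if_neg (by omega), mul_zero])]
      rw [dif_pos hk]
      simp only [Matrix.smul_apply, Em, Fin.val_mk, smul_eq_mul]
      rw [if_pos ⟨hj, by omega⟩, mul_one]
      have hsf : X i j = X ⟨(i : ℕ) - (j : ℕ) + 1, by omega⟩ ⟨1, by omega⟩ := by
        have h2 := hstr (j : ℕ) hj j.isLt i
        rw [Fin.eta] at h2
        rw [h2, if_pos hle]
      rw [hsf]
      exact hcg _ _ _ _ (by omega) rfl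
    · -- zero entry
      rw [Finset.sum_eq_zero (fun p _ => by
        simp only [Matrix.smul_apply, Em, Fin.val_mk, smul_eq_mul]
        rw [if_neg (by omega), mul_zero])]
      by_cases hle : (j : ℕ) ≤ (i : ℕ)
      · have h2 := hstr (j : ℕ) hj j.isLt i
        rw [Fin.eta] at h2
        rw [h2, if_pos hle]
        have h3 : ((i : ℕ) - (j : ℕ)) % 2 = 0 := by omega
        have h4 := heven ((i : ℕ) - (j : ℕ)) (by omega) h3
        exact h4
      · have h2 := hstr (j : ℕ) hj j.isLt i
        rw [Fin.eta] at h2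
        rw [h2, if_neg hle]
  · -- j = 0 column
    rw [Finset.sum_eq_zero (fun p _ => by
      simp only [Matrix.smul_apply, Em, Fin.val_mk, smul_eq_mul]
      rw [if_neg (by omega), mul_zero])]
    have hj0 : j = ⟨0, by omega⟩ := Fin.ext (by simp only [Fin.val_mk]; omega)
    by_cases hi : 1 ≤ (i : ℕ)
    · rw [hj0]; exact hcol0 i hi
    · have hi0 : i = ⟨0, by omega⟩ := Fin.ext (by omega)
      rw [hj0, hi0]; exact h00

set_option maxHeartbeats 1000000 in
lemma odd_struct (hn : 1 ≤ n) (X : Matrix (Fin (2 * n + 1)) (Fin (2 * n + 1)) ℂ)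
    (hX : X ∈ ospOdd n ⊓ LinearMap.ker (adM n (fReg n))) :
    X = X ⟨2 * n, by omega⟩ ⟨0, by omega⟩ • Wm n := by
  obtain ⟨⟨hpar, hodd⟩, hker⟩ := hX
  have hcg : ∀ {a a' b b' : ℕ} (ha : a < 2*n+1) (ha' : a' < 2*n+1) (hb : b < 2*n+1)
      (hb' : b' < 2*n+1), a = a' → b = b' → X ⟨a, ha⟩ ⟨b, hb⟩ = X ⟨a', ha'⟩ ⟨b', hb'⟩ := by
    intro a a' b b' ha ha' hb hb' h1 h2
    subst h1; subst h2; rfl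
  have hcomm : fReg n * X = X * fReg n := by
    have h0 := LinearMap.mem_ker.mp hker
    simp only [adM, LinearMap.sub_apply, LinearMap.mulLeft_apply,
      LinearMap.mulRight_apply] at h0
    exact sub_eq_zero.mp h0
  have hsame : ∀ i j : Fin (2*n+1),
      ((i : ℕ) = 0 ∧ (j : ℕ) = 0) ∨ (1 ≤ (i : ℕ) ∧ 1 ≤ (j : ℕ)) → X i j = 0 := by
    intro i j hij
    apply hpar
    rcases hij with ⟨hi, hj⟩ | ⟨hi, hj⟩
    · simp only [pr]; rw [if_pos hi, if_pos hj]
    · simp only [pr]; rw [if_neg (by omega), if_neg (by omega)]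
  have hcol : ∀ (a : ℕ) (ha : a < 2*n+1), 1 ≤ a → a ≤ 2*n - 1 →
      X ⟨a, ha⟩ ⟨0, by omega⟩ = 0 := by
    intro a ha h1 h2
    have hq := congrFun (congrFun hcomm ⟨a+1, by omega⟩) ⟨0, by omega⟩
    rw [fmul, mulf] at hq
    rw [dif_pos (show 2 ≤ ((⟨a+1, by omega⟩ : Fin (2*n+1)) : ℕ) by
        simp only [Fin.val_mk]; omega),
      dif_neg (by simp only [Fin.val_mk]; omega)] at hq
    simp only [Fin.val_mk] at hq
    exact (hcg _ _ _ _ (by omega) rfl).trans hq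
  have hrow : ∀ (b : ℕ) (hb : b < 2*n+1), 2 ≤ b → X ⟨0, by omega⟩ ⟨b, hb⟩ = 0 := by
    intro b hb h2
    have hq := congrFun (congrFun hcomm ⟨0, by omega⟩) ⟨b-1, by omega⟩
    rw [fmul, mulf] at hq
    rw [dif_neg (by simp only [Fin.val_mk]; omega),
      dif_pos (show 1 ≤ ((⟨b-1, by omega⟩ : Fin (2*n+1)) : ℕ) ∧
          ((⟨b-1, by omega⟩ : Fin (2*n+1)) : ℕ) + 1 < 2*n+1 by
        constructor <;> (simp only [Fin.val_mk]; omega))] at hq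
    simp only [Fin.val_mk] at hq
    exact (hcg _ _ _ _ rfl (by omega)).trans hq.symm
  have hst : X ⟨0, by omega⟩ ⟨1, by omega⟩ = X ⟨2*n, by omega⟩ ⟨0, by omega⟩ := by
    have h1 := hodd ⟨0, by omega⟩ ⟨1, by omega⟩
    rw [tBmul, Bmul] at h1
    rw [dif_pos (show 1 ≤ ((⟨1, by omega⟩ : Fin (2*n+1)) : ℕ) from le_refl 1),
      dif_neg (show ¬ 1 ≤ ((⟨0, by omega⟩ : Fin (2*n+1)) : ℕ) by
        simp only [Fin.val_mk]; omega)] at h1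
    simp only [Fin.val_mk] at h1
    have hp0 : ((pr n ⟨0, by omega⟩).val) = 0 := by
      show ((if (0 : ℕ) = 0 then (0 : ZMod 2) else 1).val) = 0
      rw [if_pos rfl]; rfl
    have p1 : ((-1 : ℂ)) ^ (2*n+1-1+1) = -1 := by rw [neg_one_pow_mod, if_neg (by omega)]
    have e1 : X ⟨2*n+1-1, by omega⟩ ⟨0, by omega⟩ = X ⟨2*n, by omega⟩ ⟨0, by omega⟩ :=
      hcg _ _ _ _ (by omega) rfl
    rw [hp0, pow_zero, one_mul, p1, e1] at h1
    linear_combination h1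
  ext i j
  rw [Matrix.smul_apply, smul_eq_mul]
  simp only [Wm]
  by_cases hc1 : (i : ℕ) = 2*n ∧ (j : ℕ) = 0
  · rw [if_pos (Or.inl hc1), mul_one]
    rw [show i = ⟨2*n, by omega⟩ from Fin.ext (by simp only [Fin.val_mk]; omega),
      show j = ⟨0, by omega⟩ from Fin.ext (by simp only [Fin.val_mk]; omega)]
  · by_cases hc2 : (i : ℕ) = 0 ∧ (j : ℕ) = 1
    · rw [if_pos (Or.inr hc2), mul_one]
      rw [show i = ⟨0, by omega⟩ from Fin.ext (by simp only [Fin.val_mk]; omega),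
        show j = ⟨1, by omega⟩ from Fin.ext (by simp only [Fin.val_mk]; omega)]
      exact hst
    · rw [if_neg (by omega), mul_zero]
      rcases Nat.eq_zero_or_pos (j : ℕ) with hj | hj
      · rcases Nat.eq_zero_or_pos (i : ℕ) with hi | hi
        · exact hsame i j (Or.inl ⟨hi, hj⟩)
        · rw [show i = ⟨(i : ℕ), i.isLt⟩ from (Fin.eta i i.isLt).symm,
            show j = ⟨0, by omega⟩ from Fin.ext (by simp only [Fin.val_mk]; omega)]
          exact hcol (i : ℕ) i.isLt hi (by omega)
      · rcases Nat.eq_zero_or_pos (i : ℕ) with hi | hi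
        · rw [show i = ⟨0, by omega⟩ from Fin.ext (by simp only [Fin.val_mk]; omega),
            show j = ⟨(j : ℕ), j.isLt⟩ from (Fin.eta j j.isLt).symm]
          exact hrow (j : ℕ) j.isLt (by omega)
        · exact hsame i j (Or.inr ⟨hi, hj⟩)

lemma eval_sum (c : Fin n → ℂ) (k : Fin n) (h1 : 2 * (k : ℕ) + 2 < 2 * n + 1)
    (h2 : 1 < 2 * n + 1) :
    (∑ k' : Fin n, c k' • Em n (2 * (k' : ℕ) + 1)) ⟨2 * (k : ℕ) + 2, h1⟩ ⟨1, h2⟩ = c k := by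
  rw [Matrix.sum_apply]
  rw [sum_support (k : ℕ) _ (fun p hp => by
    simp only [Matrix.smul_apply, Em, Fin.val_mk, smul_eq_mul]
    rw [if_neg (by omega), mul_zero])]
  rw [dif_pos k.isLt]
  simp only [Matrix.smul_apply, Em, Fin.val_mk, smul_eq_mul]
  rw [if_pos ⟨le_refl 1, by omega⟩, mul_one, Fin.eta]
/-- for `g = osp(1,2n)` with the Dynkin grading of the regular nilpotent
`f` of the even part `sp(2n)`, the centralizer `g^f = g_ev^f ⊕ g_od^f` satisfies:
`g_ev^f` has dimension `n` with one-dimensional pieces in degrees `-(2i-1)`,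
`i = 1, …, n` (the exponents of `sp(2n)`), and `g_od^f` is one-dimensional, contained in
degree `-(n - 1/2)`. -/
theorem osp_regular_centralizer (n : ℕ) (hn : 1 ≤ n) :
    Module.finrank ℂ ↥(ospEven n ⊓ LinearMap.ker (adM n (fReg n))) = n ∧
    (∀ i ∈ Finset.Icc 1 n,
      Module.finrank ℂ
        ↥(ospEven n ⊓ LinearMap.ker (adM n (fReg n))
            ⊓ Module.End.eigenspace (adM n (xReg n)) (-(2 * (i : ℂ) - 1))) = 1) ∧
    (ospEven n ⊓ LinearMap.ker (adM n (fReg n))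
      ≤ ⨆ i ∈ Finset.Icc 1 n,
          Module.End.eigenspace (adM n (xReg n)) (-(2 * (i : ℂ) - 1))) ∧
    Module.finrank ℂ ↥(ospOdd n ⊓ LinearMap.ker (adM n (fReg n))) = 1 ∧
    (ospOdd n ⊓ LinearMap.ker (adM n (fReg n))
      ≤ Module.End.eigenspace (adM n (xReg n)) (-((2 * (n : ℂ) - 1) / 2))) := by
  -- even span description
  have hspan : ospEven n ⊓ LinearMap.ker (adM n (fReg n)) =
      Submodule.span ℂ (Set.range (fun k : Fin n => Em n (2 * (k : ℕ) + 1))) := by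
    apply le_antisymm
    · intro X hX
      rw [even_struct hn X hX]
      exact Submodule.sum_mem _ fun k _ =>
        Submodule.smul_mem _ _ (Submodule.subset_span ⟨k, rfl⟩)
    · rw [Submodule.span_le]
      rintro _ ⟨k, rfl⟩
      exact Submodule.mem_inf.mpr ⟨Em_even (by omega), Em_ker⟩
  have hli : LinearIndependent ℂ (fun k : Fin n => Em n (2 * (k : ℕ) + 1)) := by
    rw [Fintype.linearIndependent_iff]
    intro g hg k
    have h2 := congrFun (congrFun hg ⟨2 * (k : ℕ) + 2, by omega⟩) ⟨1, by omega⟩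
    rw [eval_sum g k] at h2
    simpa using h2
  refine ⟨?_, ?_, ?_, ?_, ?_⟩
  · rw [hspan, finrank_span_eq_card hli, Fintype.card_fin]
  · intro i hi
    rw [Finset.mem_Icc] at hi
    obtain ⟨k, rfl⟩ : ∃ k : ℕ, i = k + 1 := ⟨i - 1, by omega⟩
    have hk : k < n := by omega
    have hval : (-(2 * ((k + 1 : ℕ) : ℂ) - 1)) = -(((2 * k + 1 : ℕ) : ℂ)) := by
      push_cast; ring
    have hsub : ospEven n ⊓ LinearMap.ker (adM n (fReg n)) ⊓
        Module.End.eigenspace (adM n (xReg n)) (-(2 * ((k + 1 : ℕ) : ℂ) - 1)) =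
        Submodule.span ℂ {Em n (2 * k + 1)} := by
      apply le_antisymm
      · intro X hX
        obtain ⟨hX1, hX2⟩ := Submodule.mem_inf.mp hX
        have hrep := even_struct hn X hX1
        have heig := Module.End.mem_eigenspace_iff.mp hX2
        simp only [adM, LinearMap.sub_apply, LinearMap.mulLeft_apply,
          LinearMap.mulRight_apply] at heig
        have hck : ∀ k' : Fin n, (k' : ℕ) ≠ k →
            X ⟨2 * (k' : ℕ) + 2, by omega⟩ ⟨1, by omega⟩ = 0 := by
          intro k' hk'
          have ha := congrFun (congrFun heig ⟨2 * (k' : ℕ) + 2, by omega⟩) ⟨1, by omega⟩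
          rw [Matrix.sub_apply, xmul, mulx, Matrix.smul_apply, smul_eq_mul] at ha
          rw [if_pos (show 1 ≤ ((⟨2 * (k' : ℕ) + 2, by omega⟩ : Fin (2 * n + 1)) : ℕ) by
              simp only [Fin.val_mk]; omega),
            if_pos (show 1 ≤ ((⟨1, by omega⟩ : Fin (2 * n + 1)) : ℕ) from le_refl 1)] at ha
          simp only [Fin.val_mk] at ha
          have hzero : ((((2 * n + 1 : ℤ) - 2 * ((2 * (k' : ℕ) + 2 : ℕ) : ℤ) : ℤ) : ℂ) / 2
              - (((2 * n + 1 : ℤ) - 2 * ((1 : ℕ) : ℤ) : ℤ) : ℂ) / 2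
              - (-(2 * ((k + 1 : ℕ) : ℂ) - 1)))
              * X ⟨2 * (k' : ℕ) + 2, by omega⟩ ⟨1, by omega⟩ = 0 := by
            linear_combination ha
          rcases mul_eq_zero.mp hzero with h | h
          · exfalso
            apply hk'
            have h2 : ((k' : ℕ) : ℂ) = ((k : ℕ) : ℂ) := by
              push_cast at h
              linear_combination - h / 2
            exact_mod_cast h2
          · exact h
        rw [hrep]
        refine Submodule.sum_mem _ fun k' _ => ?_
        by_cases hkk : (k' : ℕ) = k
        · have hEq : Em n (2 * (k' : ℕ) + 1) = Em n (2 * k + 1) := by rw [hkk]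
          rw [hEq]
          exact Submodule.smul_mem _ _ (Submodule.mem_span_singleton_self _)
        · rw [hck k' hkk, zero_smul]
          exact Submodule.zero_mem _
      · rw [Submodule.span_le, Set.singleton_subset_iff]
        refine Submodule.mem_inf.mpr
          ⟨Submodule.mem_inf.mpr ⟨Em_even (by omega), Em_ker⟩, ?_⟩
        rw [Module.End.mem_eigenspace_iff, Em_eigen (by omega), hval]
    rw [hsub]
    exact finrank_span_singleton (Em_ne (by omega))
  · intro X hX
    rw [even_struct hn X hX]
    refine Submodule.sum_mem _ fun k _ => Submodule.smul_mem _ _ ?_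
    have hval : (-(2 * (((k : ℕ) + 1 : ℕ) : ℂ) - 1)) = -(((2 * (k : ℕ) + 1 : ℕ) : ℂ)) := by
      push_cast; ring
    have hmem : Em n (2 * (k : ℕ) + 1) ∈
        Module.End.eigenspace (adM n (xReg n)) (-(2 * (((k : ℕ) + 1 : ℕ) : ℂ) - 1)) := by
      rw [Module.End.mem_eigenspace_iff, Em_eigen (by omega), hval]
    exact Submodule.mem_iSup_of_mem ((k : ℕ) + 1)
      (Submodule.mem_iSup_of_mem (Finset.mem_Icc.mpr ⟨by omega, by omega⟩) hmem)
  · have hspanO : ospOdd n ⊓ LinearMap.ker (adM n (fReg n)) =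
        Submodule.span ℂ {Wm n} := by
      apply le_antisymm
      · intro X hX
        rw [odd_struct hn X hX]
        exact Submodule.smul_mem _ _ (Submodule.mem_span_singleton_self _)
      · rw [Submodule.span_le, Set.singleton_subset_iff]
        exact Submodule.mem_inf.mpr ⟨Wm_odd hn, Wm_ker⟩
    rw [hspanO]
    exact finrank_span_singleton (Wm_ne hn)
  · intro X hX
    rw [odd_struct hn X hX]
    exact Submodule.smul_mem _ _ (Module.End.mem_eigenspace_iff.mpr (Wm_eigen hn))


end OSP
end

section
/- Restricted root base for the subregular grading of sl_n: with the good grading of sl_n for f_sub in which α_1 has degree 0 and α_2,…,α_{n−1} have degree 1, the set of indecomposable roots in the positive part of Δ \ Δ_0 is Π̄ = {α_1+α_2, α_2, α_3, …, α_{n−1}}, and under the equivalence α ∼ β iff α − β ∈ Zα_1, its equivalence classes are [α_2] = {α_1+α_2, α_2} and [α_i] = {α_i} for i = 3,…,n−1. -/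
open scoped BigOperators

/-- `ε_{a+1}` (0-indexed `a`) in the weight space of `gl_n`, junk `0` out of range. -/
noncomputable def epsV (n a : ℕ) : Fin n → ℤ :=
  if h : a < n then Pi.single ⟨a, h⟩ 1 else 0

/-- The simple root `α_i = ε_i − ε_{i+1}` (1-indexed `i`). -/
noncomputable def simpleRt (n i : ℕ) : Fin n → ℤ := epsV n (i - 1) - epsV n i

/-- The weight `w_i = x`-eigenvalue of `ε_i` for the subregular grading of `sl_n`:
`deg α₁ = 0` and `deg α_i = 1` for `i ≥ 2`; 0-indexed: `w 0 = 0`, `w a = 1 - a`. -/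
def subregWt (a : ℕ) : ℤ := if a = 0 then 0 else 1 - (a : ℤ)

/-- The degree of a weight-vector under the subregular grading. -/
noncomputable def degRt (n : ℕ) (r : Fin n → ℤ) : ℤ :=
  ∑ i : Fin n, subregWt (i : ℕ) * r i

/-- The root system `Δ = {ε_i − ε_j : i ≠ j}` of `sl_n`. -/
def rootsSL (n : ℕ) : Set (Fin n → ℤ) :=
  {r | ∃ i j : Fin n, i ≠ j ∧ r = Pi.single i 1 - Pi.single j 1}

/-- The positive part `Δ̄₊` of `Δ \ Δ₀`: roots of positive degree. -/
def rootsPos (n : ℕ) : Set (Fin n → ℤ) :=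
  {r | r ∈ rootsSL n ∧ 0 < degRt n r}

/-- Indecomposability in `Δ̄₊`. -/
def IndecRt (n : ℕ) (r : Fin n → ℤ) : Prop :=
  r ∈ rootsPos n ∧ ¬∃ s ∈ rootsPos n, ∃ t ∈ rootsPos n, r = s + t

lemma epsV_of_lt {n a : ℕ} (h : a < n) : epsV n a = Pi.single ⟨a, h⟩ 1 := dif_pos h

lemma epsV_val {n : ℕ} (i : Fin n) : epsV n (i : ℕ) = Pi.single i 1 := by
  rw [epsV_of_lt i.isLt]

lemma epsV_apply {n a : ℕ} (x : Fin n) : epsV n a x = if (x : ℕ) = a then 1 else 0 := by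
  unfold epsV
  by_cases h : a < n
  · rw [dif_pos h]
    simp [Pi.single_apply, Fin.ext_iff]
  · rw [dif_neg h]
    have := x.isLt
    rw [if_neg (by omega)]
    rfl

lemma degRt_single {n : ℕ} (i : Fin n) : degRt n (Pi.single i 1) = subregWt i := by
  simp [degRt, Pi.single_apply, mul_ite]

lemma degRt_add {n : ℕ} (s t : Fin n → ℤ) : degRt n (s + t) = degRt n s + degRt n t := by
  simp [degRt, mul_add, Finset.sum_add_distrib]

lemma degRt_sub {n : ℕ} (s t : Fin n → ℤ) : degRt n (s - t) = degRt n s - degRt n t := by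
  simp [degRt, mul_sub, Finset.sum_sub_distrib]

lemma indec_iff {n : ℕ} (r : Fin n → ℤ) :
    IndecRt n r ↔ r ∈ rootsSL n ∧ degRt n r = 1 := by
  constructor
  · rintro ⟨⟨hroot, hpos⟩, hnd⟩
    refine ⟨hroot, ?_⟩
    by_contra hne
    have h2 : 2 ≤ degRt n r := by omega
    obtain ⟨i, j, hij, hr⟩ := hroot
    have hdeg : degRt n r = subregWt (i : ℕ) - subregWt (j : ℕ) := by
      rw [hr, degRt_sub, degRt_single, degRt_single]
    have hwi : subregWt (i : ℕ) ≤ 0 := by unfold subregWt; split_ifs <;> omega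
    have hwj2 : subregWt (j : ℕ) ≤ -2 := by omega
    have hj3 : 3 ≤ (j : ℕ) := by unfold subregWt at hwj2; split_ifs at hwj2 <;> omega
    have hjn := j.isLt
    set e : Fin n := ⟨(j : ℕ) - 1, by omega⟩ with he
    have hev : (e : ℕ) = (j : ℕ) - 1 := rfl
    have hwe : subregWt ((e : ℕ)) = 2 - (j : ℕ) := by
      rw [hev]; unfold subregWt; rw [if_neg (by omega)]; omega
    have hwjv : subregWt ((j : ℕ)) = 1 - (j : ℕ) := by
      unfold subregWt; rw [if_neg (by omega)]
    have hie : i ≠ e := by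
      intro h
      rw [h] at hdeg
      omega
    have hej : e ≠ j := by
      intro h
      have : (e : ℕ) = (j : ℕ) := congrArg Fin.val h
      omega
    exact hnd ⟨Pi.single i 1 - Pi.single e 1,
      ⟨⟨i, e, hie, rfl⟩, by rw [degRt_sub, degRt_single, degRt_single]; omega⟩,
      Pi.single e 1 - Pi.single j 1,
      ⟨⟨e, j, hej, rfl⟩, by rw [degRt_sub, degRt_single, degRt_single]; omega⟩,
      by rw [hr]; abel⟩
  · rintro ⟨hroot, hdeg⟩
    refine ⟨⟨hroot, by omega⟩, ?_⟩
    rintro ⟨s, ⟨hs, hspos⟩, t, ⟨ht, htpos⟩, hst⟩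
    rw [hst, degRt_add] at hdeg
    omega

lemma wt_eq_one {a b : ℕ} (h : subregWt a - subregWt b = 1) :
    ((a = 0 ∨ a = 1) ∧ b = 2) ∨ (2 ≤ a ∧ b = a + 1) := by
  unfold subregWt at h; split_ifs at h <;> omega

lemma mem_char {n : ℕ} (hn : 3 ≤ n) (r : Fin n → ℤ) :
    IndecRt n r ↔ (r = simpleRt n 1 + simpleRt n 2 ∨
      ∃ i : ℕ, 2 ≤ i ∧ i ≤ n - 1 ∧ r = simpleRt n i) := by
  rw [indec_iff]
  constructor
  · rintro ⟨⟨i, j, hij, hr⟩, hdeg⟩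
    have hdeg' : subregWt (i : ℕ) - subregWt (j : ℕ) = 1 := by
      rw [hr, degRt_sub, degRt_single, degRt_single] at hdeg; exact hdeg
    have hr' : r = epsV n (i : ℕ) - epsV n (j : ℕ) := by
      rw [epsV_val, epsV_val, hr]
    have hjn := j.isLt
    rcases wt_eq_one hdeg' with ⟨ha, hb⟩ | ⟨ha, hb⟩
    · rcases ha with ha | ha
      · left
        rw [hr', ha, hb]
        have h1 : simpleRt n 1 = epsV n 0 - epsV n 1 := by norm_num [simpleRt]
        have h2 : simpleRt n 2 = epsV n 1 - epsV n 2 := by norm_num [simpleRt]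
        rw [h1, h2]; abel
      · right
        refine ⟨2, le_rfl, by omega, ?_⟩
        rw [hr', ha, hb]
        norm_num [simpleRt]
    · right
      refine ⟨(i : ℕ) + 1, by omega, by omega, ?_⟩
      rw [hr', hb]
      have : simpleRt n ((i : ℕ) + 1) = epsV n (i : ℕ) - epsV n ((i : ℕ) + 1) := by
        simp [simpleRt]
      rw [this]
  · rintro (h | ⟨i, hi2, hin, h⟩)
    · subst h
      have e1 : simpleRt n 1 = epsV n 0 - epsV n 1 := by norm_num [simpleRt]
      have e2 : simpleRt n 2 = epsV n 1 - epsV n 2 := by norm_num [simpleRt]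
      have h1 : simpleRt n 1 + simpleRt n 2 = epsV n 0 - epsV n 2 := by
        rw [e1, e2]; abel
      rw [h1, epsV_of_lt (show 0 < n by omega), epsV_of_lt (show 2 < n by omega)]
      refine ⟨⟨_, _, ?_, rfl⟩, ?_⟩
      · simp [Fin.ext_iff]
      · rw [degRt_sub, degRt_single, degRt_single]
        norm_num [subregWt]
    · subst h
      have hiltn : i < n := by omega
      have him : i - 1 < n := by omega
      have h1 : simpleRt n i = Pi.single (⟨i - 1, him⟩ : Fin n) 1 -
          Pi.single (⟨i, hiltn⟩ : Fin n) 1 := by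
        rw [simpleRt, epsV_of_lt him, epsV_of_lt hiltn]
      rw [h1]
      refine ⟨⟨_, _, ?_, rfl⟩, ?_⟩
      · simp only [ne_eq, Fin.mk.injEq]; omega
      · rw [degRt_sub, degRt_single, degRt_single]
        simp only [Fin.val_mk]
        unfold subregWt
        split_ifs <;> omega

lemma alpha1_coord {n : ℕ} {c : ℕ} (hc : c < n) (h2 : 2 ≤ c) :
    simpleRt n 1 ⟨c, hc⟩ = 0 := by
  simp only [simpleRt, Pi.sub_apply, epsV_apply, Fin.val_mk]
  split_ifs <;> omega

/-- for the subregular good grading of `sl_n` (`deg α₁ = 0`,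
`deg α_i = 1` for `i ≥ 2`), the base of the restricted root system is
`Π̄ = {α₁+α₂, α₂, α₃, …, α_{n-1}}`, and under `α ∼ β ⟺ α − β ∈ ℤα₁` the classes are
`[α₂] = {α₂, α₁+α₂}` and `[α_i] = {α_i}` for `3 ≤ i ≤ n-1`. -/
theorem subregular_restricted_base (n : ℕ) (hn : 3 ≤ n) :
    ({r | IndecRt n r}
      = insert (simpleRt n 1 + simpleRt n 2)
          {r | ∃ i : ℕ, 2 ≤ i ∧ i ≤ n - 1 ∧ r = simpleRt n i}) ∧
    ({s | IndecRt n s ∧ ∃ m : ℤ, s - simpleRt n 2 = m • simpleRt n 1}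
      = {simpleRt n 2, simpleRt n 1 + simpleRt n 2}) ∧
    (∀ i : ℕ, 3 ≤ i → i ≤ n - 1 →
      {s | IndecRt n s ∧ ∃ m : ℤ, s - simpleRt n i = m • simpleRt n 1}
        = {simpleRt n i}) := by
  refine ⟨?_, ?_, ?_⟩
  · ext r
    simp only [Set.mem_setOf_eq, Set.mem_insert_iff]
    exact mem_char hn r
  · ext s
    simp only [Set.mem_setOf_eq, Set.mem_insert_iff, Set.mem_singleton_iff]
    constructor
    · rintro ⟨hind, m, hm⟩
      rcases (mem_char hn s).1 hind with h | ⟨i, hi2, hin, h⟩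
      · exact Or.inr h
      · rcases eq_or_ne i 2 with h2 | h2
        · left; rw [h, h2]
        · exfalso
          have h2n : 2 < n := by omega
          have hx := congrFun hm ⟨2, h2n⟩
          rw [Pi.sub_apply, Pi.smul_apply, alpha1_coord h2n le_rfl, smul_zero, h] at hx
          simp only [simpleRt, Pi.sub_apply, epsV_apply, Fin.val_mk] at hx
          split_ifs at hx <;> omega
    · rintro (h | h) <;> subst h
      · exact ⟨(mem_char hn _).2 (Or.inr ⟨2, le_rfl, by omega, rfl⟩), 0, by simp⟩
      · exact ⟨(mem_char hn _).2 (Or.inl rfl), 1,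
          by rw [one_smul, add_sub_cancel_right]⟩
  · intro i hi3 hin
    ext s
    simp only [Set.mem_setOf_eq, Set.mem_singleton_iff]
    constructor
    · rintro ⟨hind, m, hm⟩
      have hlt : i - 1 < n := by omega
      have h1 := alpha1_coord hlt (by omega)
      rcases (mem_char hn s).1 hind with h | ⟨j, hj2, hjn, h⟩
      · exfalso
        have hx := congrFun hm ⟨i - 1, hlt⟩
        rw [Pi.sub_apply, Pi.smul_apply, h1, smul_zero, h] at hx
        simp only [simpleRt, Pi.add_apply, Pi.sub_apply, epsV_apply, Fin.val_mk] at hx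
        split_ifs at hx <;> omega
      · rcases eq_or_ne j i with hji | hji
        · rw [h, hji]
        · exfalso
          have hx := congrFun hm ⟨i - 1, hlt⟩
          rw [Pi.sub_apply, Pi.smul_apply, h1, smul_zero, h] at hx
          simp only [simpleRt, Pi.sub_apply, epsV_apply, Fin.val_mk] at hx
          split_ifs at hx <;> omega
    · rintro h
      subst h
      exact ⟨(mem_char hn _).2 (Or.inr ⟨i, by omega, hin, rfl⟩), 0, by simp⟩
end

section
/- Sugawara-type Virasoro field for the degree-zero subalgebra: let g_0 = ⊕_{s=0}^m g'_s be a finite-dimensional reductive Lie (super)algebra with g'_0 its center and g'_s simple for s > 0, equipped with an invariant form τ such that on each g'_s one has τ = (k + h^∨ − r_s)(·|·) with k + h^∨ − r_s ≠ 0 appropriately, where κ_{g_0} = 2r_s(·|·) on g'_s and r_0 = 0. Then L(z) = (1/(2(k+h^∨))) Σ_i :J^{u^i}(z) J^{u_i}(z): is a Virasoro field on the affine vertex superalgebra V^τ(g_0), where {u_i} and {u^i} are dual bases of g_0 with respect to (·|·). -/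
open scoped BigOperators

/-!
Put `Ω = ∑ᵢ :J^{u'ᵢ} J^{uᵢ}:` and let `A` act on `g'_s` by `k + h^∨ - r_s`, so that
`τ(x|y) = (Ax|y)`. The Casimir operator `Cas = ∑ᵢ ad uᵢ ad u'ᵢ` satisfies
`(z|Cas y) = κ_{g₀}(z, y)`, so it acts on `g'_s` by `2 r_s`, hence `Cas + 2A = 2(k + h^∨)`.
The commutator formula gives `J^x_(0) Ω = 0`, `J^x_(1) Ω = J^{(Cas + 2A) x} = 2(k + h^∨) J^x`
and `J^x_(n) Ω = 0` for `n ≥ 2` (for `n = 2` because `τ` is symmetric and `(·|·)` invariant),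
so by skew-symmetry every current is primary of weight one for `Ω / 2(k + h^∨)`. The commutator
formula applied to the quadratic terms of `Ω` then gives
`[Ω_λ Ω] = 2(k + h^∨)((∂ + 2λ)Ω + (λ³/6) ∑ᵢ τ(u'ᵢ|uᵢ))`.
-/

def IsDualPair {R M ι : Type*} [CommRing R] [AddCommGroup M] [Module R M] [Fintype ι]
    (B : M →ₗ[R] M →ₗ[R] R) (u u' : ι → M) : Prop :=
  ∀ x, ∑ i, B x (u i) • u' i = x

namespace IsDualPair

variable {R M N ι : Type*} [CommRing R] [AddCommGroup M] [Module R M] [AddCommGroup N]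
  [Module R N] [Fintype ι] {B : M →ₗ[R] M →ₗ[R] R} {u u' : ι → M}

theorem eq_zero_of_forall_apply_eq_zero (h : IsDualPair B u u') {w : M}
    (hw : ∀ z, B w z = 0) : w = 0 := by
  simpa [hw] using (h w).symm

theorem symm (h : IsDualPair B u u') (hB : ∀ x y, B x y = B y x) : IsDualPair B u' u := by
  intro x
  rw [← sub_eq_zero]
  refine h.eq_zero_of_forall_apply_eq_zero fun z => ?_
  calc B (∑ i, B x (u' i) • u i - x) z = B x (∑ i, B z (u i) • u' i) - B x z := by
        simp only [map_sub, map_sum, map_smul, LinearMap.sub_apply, LinearMap.sum_apply,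
          LinearMap.smul_apply, smul_eq_mul, hB _ z, mul_comm]
    _ = 0 := by rw [h z, sub_self]

theorem sum_map_swap (h : IsDualPair B u u') (hB : ∀ x y, B x y = B y x)
    (F : M →ₗ[R] M →ₗ[R] N) : ∑ i, F (u' i) (u i) = ∑ i, F (u i) (u' i) := by
  have expand (i : ι) : u' i = ∑ j, B (u' i) (u' j) • u j := ((h.symm hB) (u' i)).symm
  calc ∑ i, F (u' i) (u i) = ∑ i, F (∑ j, B (u' i) (u' j) • u j) (u i) := by
        simp_rw [← expand]
    _ = ∑ j, ∑ i, B (u' i) (u' j) • F (u j) (u i) := by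
        rw [Finset.sum_comm]; simp [map_sum, map_smul]
    _ = ∑ j, F (u j) (∑ i, B (u' j) (u' i) • u i) := by
        simp only [hB (u' _) (u' _), map_sum, map_smul]
    _ = ∑ i, F (u i) (u' i) := by simp_rw [← expand]

theorem trace_eq [Module.Free R M] [Module.Finite R M] (h : IsDualPair B u u') (f : M →ₗ[R] M) :
    LinearMap.trace R M f = ∑ i, B (f (u' i)) (u i) := by
  have hf : f = ∑ i, dualTensorHom R M M (B.flip (u i) ⊗ₜ f (u' i)) := by
    ext x
    conv_lhs => rw [← h x]
    simp [map_sum, map_smul]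
  conv_lhs => rw [hf]
  simp [map_sum, LinearMap.trace_eq_contract_apply]

end IsDualPair

namespace DirectSum.IsInternal

variable {R M N κ : Type*} [CommRing R] [AddCommGroup M] [Module R M] [AddCommGroup N]
  [Module R N] [DecidableEq κ] {G : κ → Submodule R M}

theorem linearMap_ext (hG : IsInternal G) {f g : M →ₗ[R] N}
    (h : ∀ s, ∀ x ∈ G s, f x = g x) : f = g := by
  refine LinearMap.ext_on (s := ⋃ s, (G s : Set M)) ?_ ?_
  · rw [← Submodule.iSup_eq_span, hG.submodule_iSup_eq_top]
  · intro x hx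
    obtain ⟨s, hx⟩ := Set.mem_iUnion.mp hx
    exact h s x hx

theorem linearMap_ext₂ (hG : IsInternal G) {f g : M →ₗ[R] M →ₗ[R] N}
    (h : ∀ s t, ∀ x ∈ G s, ∀ y ∈ G t, f x y = g x y) : f = g :=
  hG.linearMap_ext fun s x hx => hG.linearMap_ext fun t y hy => h s t x hx y hy

noncomputable def blockScalar (hG : IsInternal G) (c : κ → R) : M →ₗ[R] M :=
  toModule R κ M (fun s => c s • (G s).subtype) ∘ₗ
    (LinearEquiv.ofBijective (coeLinearMap G) hG).symm.toLinearMap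

theorem blockScalar_apply_of_mem (hG : IsInternal G) (c : κ → R) {s : κ} {x : M}
    (hx : x ∈ G s) : hG.blockScalar c x = c s • x := by
  have hof : (LinearEquiv.ofBijective (coeLinearMap G) hG).symm x =
      lof R κ (fun s => G s) s ⟨x, hx⟩ := by
    rw [LinearEquiv.symm_apply_eq]
    exact (coeLinearMap_lof G s ⟨x, hx⟩).symm
  simp [blockScalar, hof, toModule_lof]

end DirectSum.IsInternal

def casimir (R : Type*) {L ι : Type*} [CommRing R] [LieRing L] [LieAlgebra R L] [Fintype ι]
    (u u' : ι → L) : Module.End R L :=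
  ∑ i, LieAlgebra.ad R L (u i) ∘ₗ LieAlgebra.ad R L (u' i)

theorem casimir_apply {R L ι : Type*} [CommRing R] [LieRing L] [LieAlgebra R L] [Fintype ι]
    (u u' : ι → L) (x : L) : casimir R u u' x = ∑ i, ⁅⁅x, u' i⁆, u i⁆ := by
  simp only [casimir, LinearMap.sum_apply, LinearMap.comp_apply, LieAlgebra.ad_apply]
  refine Finset.sum_congr rfl fun i _ => ?_
  rw [← lie_skew ⁅x, u' i⁆ (u i), ← lie_skew x (u' i), lie_neg, neg_neg]

namespace IsDualPair

variable {R L N ι κ : Type*} [CommRing R] [LieRing L] [LieAlgebra R L] [AddCommGroup N]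
  [Module R N] [Fintype ι] {B : L →ₗ[R] L →ₗ[R] R} {u u' : ι → L}

theorem sum_map_lie_left (h : IsDualPair B u u') (hB : ∀ x y, B x y = B y x)
    (hBinv : ∀ x y z, B ⁅x, y⁆ z = B x ⁅y, z⁆) (F : L →ₗ[R] L →ₗ[R] N) (x : L) :
    ∑ i, F ⁅x, u' i⁆ (u i) = -∑ i, F (u' i) ⁅x, u i⁆ := by
  have hB' (a b : L) : B ⁅x, a⁆ b = -B ⁅x, b⁆ a := by
    rw [hB ⁅x, b⁆, ← lie_skew, map_neg, LinearMap.neg_apply, hBinv]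
  calc ∑ i, F ⁅x, u' i⁆ (u i) = ∑ i, F (∑ j, B ⁅x, u' i⁆ (u j) • u' j) (u i) := by
        simp_rw [h _]
    _ = ∑ j, ∑ i, (-B ⁅x, u j⁆ (u' i)) • F (u' j) (u i) := by
        simp only [map_sum, map_smul, LinearMap.sum_apply, LinearMap.smul_apply]
        rw [Finset.sum_comm]
        exact Finset.sum_congr rfl fun j _ => Finset.sum_congr rfl fun i _ => by rw [hB']
    _ = -∑ j, F (u' j) (∑ i, B ⁅x, u j⁆ (u' i) • u i) := by
        simp only [neg_smul, Finset.sum_neg_distrib, map_sum, map_smul]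
    _ = -∑ j, F (u' j) ⁅x, u j⁆ := by simp_rw [h.symm hB _]

theorem sum_lie_eq_zero [IsAddTorsionFree L] (h : IsDualPair B u u')
    (hB : ∀ x y, B x y = B y x) : ∑ i, ⁅u' i, u i⁆ = 0 := by
  have hswap := h.sum_map_swap hB (LinearMap.mk₂ R (⁅·, ·⁆) add_lie smul_lie lie_add lie_smul)
  simp only [LinearMap.mk₂_apply] at hswap
  rw [← self_eq_neg]
  nth_rw 1 [hswap]
  rw [← Finset.sum_neg_distrib]
  simp only [lie_skew]

theorem apply_casimir [Module.Free R L] [Module.Finite R L] (h : IsDualPair B u u')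
    (hBinv : ∀ x y z, B ⁅x, y⁆ z = B x ⁅y, z⁆) (y z : L) :
    B z (casimir R u u' y) = killingForm R L z y := by
  simp [casimir_apply, killingForm_apply_apply, h.trace_eq, map_sum, hBinv]

theorem casimir_apply_of_mem [Module.Free R L] [Module.Finite R L] (h : IsDualPair B u u')
    (hB : ∀ x y, B x y = B y x) (hBinv : ∀ x y z, B ⁅x, y⁆ z = B x ⁅y, z⁆) [DecidableEq κ]
    {G : κ → Submodule R L} (hG : DirectSum.IsInternal G)
    (hideal : ∀ s, ∀ x ∈ G s, ∀ y, ⁅x, y⁆ ∈ G s)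
    (horth : ∀ s t, s ≠ t → ∀ x ∈ G s, ∀ y ∈ G t, B x y = 0) (c : κ → R)
    (hkilling : ∀ s, ∀ x ∈ G s, ∀ y ∈ G s, killingForm R L x y = c s * B x y)
    {t : κ} {y : L} (hy : y ∈ G t) : casimir R u u' y = c t • y := by
  have hκ : (killingForm R L).flip y = c t • B.flip y := by
    refine hG.linearMap_ext fun s z hz => ?_
    rcases eq_or_ne s t with rfl | hst
    · simp [hkilling s z hz y hy]
    · have hzero : LieAlgebra.ad R L z ∘ₗ LieAlgebra.ad R L y = 0 := by
        ext w
        simp only [LinearMap.comp_apply, LieAlgebra.ad_apply, LinearMap.zero_apply]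
        have hdisj := hG.submodule_iSupIndep.pairwiseDisjoint hst
        refine Submodule.disjoint_def.mp hdisj _ (hideal s z hz _) ?_
        rw [← lie_skew]
        exact neg_mem (hideal t _ (hideal t y hy w) z)
      simp [killingForm_apply_apply, hzero, horth s t hst z hz y hy]
  rw [← sub_eq_zero]
  refine h.eq_zero_of_forall_apply_eq_zero fun z => ?_
  rw [hB, map_sub, map_smul, h.apply_casimir hBinv]
  exact sub_eq_zero.mpr (by simpa using LinearMap.congr_fun hκ z)

end IsDualPair

theorem finsum_eq_add_of_two_le {M : Type*} [AddCommMonoid M] {f : ℕ → M}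
    (h : ∀ j, 2 ≤ j → f j = 0) : ∑ᶠ j, f j = f 0 + f 1 := by
  rw [finsum_eq_sum_of_support_subset f (s := Finset.range 2)]
  · simp [Finset.sum_range_succ]
  · intro j hj
    by_contra hj'
    exact hj (h j (by simp at hj'; omega))

namespace SVA

variable {V : Type*} [AddCommGroup V] [Module ℂ V] (S : SVA V) {a b : V}

theorem skew_of_pt_eq_zero (hb : S.pt b = 0) (n : ℤ) :
    S.mul n a b = ∑ᶠ j : ℕ, ((-1 : ℂ) ^ (n + (j : ℤ) + 1)) •
      (((Nat.factorial j : ℂ))⁻¹ • (S.T ^ j) (S.mul (n + (j : ℤ)) b a)) := by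
  simpa [hb] using S.skew a b n

theorem mul_zero_eq_of_pt_eq_zero (hb : S.pt b = 0) (hba : ∀ n : ℤ, 2 ≤ n → S.mul n b a = 0) :
    S.mul 0 a b = S.T (S.mul 1 b a) - S.mul 0 b a := by
  rw [S.skew_of_pt_eq_zero hb,
    finsum_eq_add_of_two_le fun j hj => by rw [hba (0 + j) (by omega)]; simp]
  simp [sub_eq_neg_add]

theorem mul_one_eq_of_pt_eq_zero (hb : S.pt b = 0) (hba : ∀ n : ℤ, 2 ≤ n → S.mul n b a = 0) :
    S.mul 1 a b = S.mul 1 b a := by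
  rw [S.skew_of_pt_eq_zero hb,
    finsum_eq_add_of_two_le fun j hj => by rw [hba (1 + j) (by omega)]; simp]
  simp [hba 2 le_rfl]

theorem mul_eq_zero_of_pt_eq_zero (hb : S.pt b = 0) (hba : ∀ n : ℤ, 2 ≤ n → S.mul n b a = 0)
    {n : ℤ} (hn : 2 ≤ n) : S.mul n a b = 0 := by
  rw [S.skew_of_pt_eq_zero hb]
  simp [fun j : ℕ => hba (n + j) (by omega)]

theorem comm_of_pt_eq_zero (hb : S.pt b = 0) (hab : ∀ n : ℤ, 2 ≤ n → S.mul n a b = 0)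
    (c : V) (m n : ℤ) :
    S.mul m a (S.mul n b c) = S.mul n b (S.mul m a c) + S.mul (m + n) (S.mul 0 a b) c
      + (m : ℂ) • S.mul (m + n - 1) (S.mul 1 a b) c := by
  have h := S.comm a b c m n
  rw [finsum_eq_add_of_two_le fun j hj => by rw [hab j (by omega)]; simp] at h
  simp only [hb, mul_zero, ZMod.val_zero, pow_zero, one_smul, sub_eq_iff_eq_add] at h
  simp [h, zbinom, add_comm, add_assoc]

theorem T_mul_neg_one (a b : V) :
    S.T (S.mul (-1) a b) = S.mul (-2) a b + S.mul (-1) a (S.T b) := by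
  rw [S.T_der, S.T_left]
  norm_num

/-- `[L_λ L] = (∂ + 2λ)L + (c/12)λ³`, written with `n`-th products. -/
def IsVirasoro (L : V) (c : ℂ) : Prop :=
  S.mul 0 L L = S.T L ∧ S.mul 1 L L = (2 : ℂ) • L ∧ S.mul 2 L L = 0 ∧
    S.mul 3 L L = (c / 2) • S.vac ∧ ∀ n : ℤ, 4 ≤ n → S.mul n L L = 0

theorem isVirasoro_inv_smul {Ω : V} {K C : ℂ} (hK : K ≠ 0)
    (h0 : S.mul 0 Ω Ω = K • S.T Ω) (h1 : S.mul 1 Ω Ω = (2 * K) • Ω) (h2 : S.mul 2 Ω Ω = 0)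
    (h3 : S.mul 3 Ω Ω = (K * C) • S.vac) (h4 : ∀ n : ℤ, 4 ≤ n → S.mul n Ω Ω = 0) :
    S.IsVirasoro (K⁻¹ • Ω) (2 * C / K) := by
  have hmul (n : ℤ) : S.mul n (K⁻¹ • Ω) (K⁻¹ • Ω) = (K⁻¹ * K⁻¹) • S.mul n Ω Ω := by
    simp only [map_smul, LinearMap.smul_apply, smul_smul]
  refine ⟨?_, ?_, ?_, ?_, fun n hn => ?_⟩ <;> rw [hmul]
  · rw [h0, map_smul, smul_smul]
    congr 1
    field_simp
  · rw [h1, smul_smul, smul_smul]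
    congr 1
    field_simp
  · rw [h2, smul_zero]
  · rw [h3, smul_smul]
    congr 1
    field_simp
  · rw [h4 n hn, smul_zero]

/-- `[Ω_λ a] = K (∂ + λ) a`: `a` is primary of conformal weight one for `K⁻¹ Ω`. -/
structure IsPrimaryWeightOne (Ω : V) (K : ℂ) (a : V) : Prop where
  mul_zero : S.mul 0 Ω a = K • S.T a
  mul_one : S.mul 1 Ω a = K • a
  mul_of_two_le : ∀ n : ℤ, 2 ≤ n → S.mul n Ω a = 0

variable {S}

theorem isPrimaryWeightOne_of_pt_eq_zero {Ω a : V} {K : ℂ} (ha : S.pt a = 0)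
    (h0 : S.mul 0 a Ω = 0) (h1 : S.mul 1 a Ω = K • a)
    (h2 : ∀ n : ℤ, 2 ≤ n → S.mul n a Ω = 0) : S.IsPrimaryWeightOne Ω K a where
  mul_zero := by rw [S.mul_zero_eq_of_pt_eq_zero ha h2, h0, h1, map_smul, sub_zero]
  mul_one := by rw [S.mul_one_eq_of_pt_eq_zero ha h2, h1]
  mul_of_two_le _ hn := S.mul_eq_zero_of_pt_eq_zero ha h2 hn

theorem IsPrimaryWeightOne.mul_normalOrder {Ω a : V} {K : ℂ} (hp : S.IsPrimaryWeightOne Ω K a)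
    (ha : S.pt a = 0) (b : V) (n : ℤ) :
    S.mul n Ω (S.mul (-1) a b) = S.mul (-1) a (S.mul n Ω b) + K • S.mul (n - 2) a b := by
  rw [S.comm_of_pt_eq_zero ha hp.mul_of_two_le, hp.mul_zero, hp.mul_one, map_smul, map_smul,
    LinearMap.smul_apply, LinearMap.smul_apply, S.T_left, show n + -1 - 1 = n - 2 by ring]
  push_cast
  module

end SVA

namespace SVA

variable {V g ι : Type*} [AddCommGroup V] [Module ℂ V] [LieRing g] [LieAlgebra ℂ g] [Fintype ι]

/-- The even currents `J^x` satisfy the λ-brackets of `V^τ(g)`: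
`[J^x_λ J^y] = J^{[x,y]} + τ(x|y)λ`. -/
structure IsCurrentAlgebra (S : SVA V) (J : g →ₗ[ℂ] V) (τ : g →ₗ[ℂ] g →ₗ[ℂ] ℂ) : Prop where
  pt_eq_zero : ∀ x, S.pt (J x) = 0
  mul_zero : ∀ x y, S.mul 0 (J x) (J y) = J ⁅x, y⁆
  mul_one : ∀ x y, S.mul 1 (J x) (J y) = τ x y • S.vac
  mul_of_two_le : ∀ x y (n : ℤ), 2 ≤ n → S.mul n (J x) (J y) = 0

def sugawaraSum (S : SVA V) (J : g →ₗ[ℂ] V) (u u' : ι → g) : V :=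
  ∑ i, S.mul (-1) (J (u' i)) (J (u i))

variable {S : SVA V} {J : g →ₗ[ℂ] V} {u u' : ι → g} {τ B : g →ₗ[ℂ] g →ₗ[ℂ] ℂ}

namespace IsCurrentAlgebra

theorem mul_one_comm (hJ : S.IsCurrentAlgebra J τ) (x y : g) :
    S.mul 1 (J x) (J y) = S.mul 1 (J y) (J x) :=
  S.mul_one_eq_of_pt_eq_zero (hJ.pt_eq_zero y) (hJ.mul_of_two_le y x)

theorem mul_normalOrder (hJ : S.IsCurrentAlgebra J τ) (x a b : g) (n : ℤ) :
    S.mul n (J x) (S.mul (-1) (J a) (J b)) = S.mul (-1) (J a) (S.mul n (J x) (J b)) +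
      S.mul (n - 1) (J ⁅x, a⁆) (J b) + (n : ℂ) • S.mul (n - 2) (τ x a • S.vac) (J b) := by
  rw [S.comm_of_pt_eq_zero (hJ.pt_eq_zero a) (hJ.mul_of_two_le x a), hJ.mul_zero, hJ.mul_one]
  simp only [← sub_eq_add_neg, sub_sub]
  norm_num

theorem mul_zero_sugawaraSum (hJ : S.IsCurrentAlgebra J τ) (h : IsDualPair B u u')
    (hB : ∀ x y, B x y = B y x) (hBinv : ∀ x y z, B ⁅x, y⁆ z = B x ⁅y, z⁆) (x : g) :
    S.mul 0 (J x) (S.sugawaraSum J u u') = 0 := by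
  have hswap := h.sum_map_lie_left hB hBinv (((S.mul (-1)).comp J).compl₂ J) x
  simp only [LinearMap.compl₂_apply, LinearMap.comp_apply] at hswap
  simp only [sugawaraSum, map_sum, hJ.mul_normalOrder, hJ.mul_zero, Int.cast_zero, zero_smul,
    add_zero, zero_sub, Finset.sum_add_distrib, hswap, add_neg_cancel]

theorem sum_mul_one_lie_eq_zero (hJ : S.IsCurrentAlgebra J τ) (h : IsDualPair B u u')
    (hB : ∀ x y, B x y = B y x) (hBinv : ∀ x y z, B ⁅x, y⁆ z = B x ⁅y, z⁆) (x : g) :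
    ∑ i, S.mul 1 (J ⁅x, u' i⁆) (J (u i)) = 0 := by
  have := IsAddTorsionFree.of_isTorsionFree ℂ V
  have hlie := h.sum_map_lie_left hB hBinv (((S.mul 1).comp J).compl₂ J) x
  have hswap := h.sum_map_swap hB ((((S.mul 1).comp J).compl₂ J) ∘ₗ LieAlgebra.ad ℂ g x)
  simp only [LinearMap.compl₂_apply, LinearMap.comp_apply, LieAlgebra.ad_apply] at hlie hswap
  rw [← self_eq_neg]
  nth_rw 1 [hlie]
  simp only [hJ.mul_one_comm (u' _), hswap]

theorem mul_one_sugawaraSum {A : g →ₗ[ℂ] g} (hJ : S.IsCurrentAlgebra J (B ∘ₗ A))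
    (h : IsDualPair B u u') (hB : ∀ x y, B x y = B y x) (x : g) :
    S.mul 1 (J x) (S.sugawaraSum J u u') = J ((casimir ℂ u u' + (2 : ℂ) • A) x) := by
  have hA : ∑ i, B (A x) (u i) • J (u' i) = J (A x) := by
    simpa only [map_sum, map_smul] using congrArg J (h (A x))
  have hA' : ∑ i, B (A x) (u' i) • J (u i) = J (A x) := by
    simpa only [map_sum, map_smul] using congrArg J (h.symm hB (A x))
  simp only [sugawaraSum, map_sum, hJ.mul_normalOrder, hJ.mul_one, hJ.mul_zero, map_smul,
    S.vac_right, LinearMap.comp_apply, Int.cast_one, one_smul, sub_self]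
  norm_num [S.vac_left_neg_one, Finset.sum_add_distrib, hA, hA', two_smul, casimir_apply]
  abel

theorem mul_sugawaraSum_of_two_le (hJ : S.IsCurrentAlgebra J τ) (h : IsDualPair B u u')
    (hB : ∀ x y, B x y = B y x) (hBinv : ∀ x y z, B ⁅x, y⁆ z = B x ⁅y, z⁆) (x : g) {n : ℤ}
    (hn : 2 ≤ n) : S.mul n (J x) (S.sugawaraSum J u u') = 0 := by
  simp only [sugawaraSum, map_sum, hJ.mul_normalOrder, hJ.mul_of_two_le x _ n hn, map_smul,
    LinearMap.smul_apply, S.vac_left _ (n - 2) (by omega), map_zero, smul_zero, add_zero,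
    zero_add]
  rcases hn.eq_or_lt with rfl | hn
  · exact hJ.sum_mul_one_lie_eq_zero h hB hBinv x
  · exact Finset.sum_eq_zero fun i _ => hJ.mul_of_two_le _ _ _ (by omega)

end IsCurrentAlgebra

theorem mul_sugawaraSum_self {K : ℂ} (hpt : ∀ x, S.pt (J x) = 0)
    (hp : ∀ x, S.IsPrimaryWeightOne (S.sugawaraSum J u u') K (J x)) (n : ℤ) :
    S.mul n (S.sugawaraSum J u u') (S.sugawaraSum J u u') =
      ∑ i, S.mul (-1) (J (u' i)) (S.mul n (S.sugawaraSum J u u') (J (u i))) +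
        K • ∑ i, S.mul (n - 2) (J (u' i)) (J (u i)) := by
  calc S.mul n (S.sugawaraSum J u u') (S.sugawaraSum J u u')
      = ∑ i, S.mul n (S.sugawaraSum J u u') (S.mul (-1) (J (u' i)) (J (u i))) := map_sum _ _ _
    _ = _ := by
      simp only [(hp _).mul_normalOrder (hpt _), Finset.sum_add_distrib, Finset.smul_sum]

theorem IsCurrentAlgebra.isVirasoro_sugawaraSum {A : g →ₗ[ℂ] g}
    (hJ : S.IsCurrentAlgebra J (B ∘ₗ A)) (h : IsDualPair B u u') (hB : ∀ x y, B x y = B y x)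
    (hBinv : ∀ x y z, B ⁅x, y⁆ z = B x ⁅y, z⁆) {K : ℂ} (hK : K ≠ 0)
    (hcas : casimir ℂ u u' + (2 : ℂ) • A = K • LinearMap.id) :
    S.IsVirasoro (K⁻¹ • S.sugawaraSum J u u') (2 * (∑ i, B (A (u' i)) (u i)) / K) := by
  have hp (x : g) : S.IsPrimaryWeightOne (S.sugawaraSum J u u') K (J x) :=
    isPrimaryWeightOne_of_pt_eq_zero (hJ.pt_eq_zero x) (hJ.mul_zero_sugawaraSum h hB hBinv x)
      (by rw [hJ.mul_one_sugawaraSum h hB, hcas, LinearMap.smul_apply, LinearMap.id_apply,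
        map_smul])
      (fun _ hn => hJ.mul_sugawaraSum_of_two_le h hB hBinv x hn)
  have hΩΩ := mul_sugawaraSum_self hJ.pt_eq_zero hp
  refine S.isVirasoro_inv_smul hK ?_ ?_ ?_ ?_ fun n hn => ?_ <;> rw [hΩΩ]
  · simp only [(hp _).mul_zero, map_smul]
    rw [sugawaraSum, map_sum]
    simp only [S.T_mul_neg_one, Finset.sum_add_distrib, ← Finset.smul_sum]
    norm_num
    module
  · simp only [(hp _).mul_one, map_smul, ← Finset.smul_sum]
    norm_num [sugawaraSum]
    module
  · have := IsAddTorsionFree.of_isTorsionFree ℂ g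
    simp [(hp _).mul_of_two_le, hJ.mul_zero, ← map_sum, h.sum_lie_eq_zero hB]
  · simp [(hp _).mul_of_two_le, hJ.mul_one, ← Finset.sum_smul, smul_smul]
  · simp [(hp _).mul_of_two_le n (by omega), hJ.mul_of_two_le _ _ (n - 2) (by omega)]

end SVA

theorem sugawara_virasoro_general
    {g0 : Type*} [LieRing g0] [LieAlgebra ℂ g0] [FiniteDimensional ℂ g0]
    {V : Type*} [AddCommGroup V] [Module ℂ V] (S : SVA V)
    (J : g0 →ₗ[ℂ] V)                      -- the currents
    (B : g0 →ₗ[ℂ] g0 →ₗ[ℂ] ℂ)             -- the normalized invariant form (·|·)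
    (k hv : ℂ) (hknc : k + hv ≠ 0)
    (m : ℕ) (gs : ℕ → Submodule ℂ g0) (r : ℕ → ℂ)
    (hdirect : DirectSum.IsInternal fun s : Fin (m + 1) => gs (s : ℕ))
    (hideal : ∀ s ≤ m, ∀ x ∈ gs s, ∀ y : g0, ⁅x, y⁆ ∈ gs s)
    (hBinv : ∀ x y z : g0, B ⁅x, y⁆ z = B x ⁅y, z⁆)
    (hBsym : ∀ x y : g0, B x y = B y x)
    (horth : ∀ s ≤ m, ∀ t ≤ m, s ≠ t → ∀ x ∈ gs s, ∀ y ∈ gs t, B x y = 0)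
    -- `κ_{g₀} = 2 r_s (·|·)` on `g'_s`
    (hkilling : ∀ s ≤ m, ∀ x ∈ gs s, ∀ y ∈ gs s,
      LinearMap.trace ℂ g0 ((LieAlgebra.ad ℂ g0 x) ∘ₗ (LieAlgebra.ad ℂ g0 y)) = 2 * r s * B x y)
    -- currents of `V^τ(g₀)`: `[J^x_λ J^y] = J^{[x,y]} + τ(x|y)λ`, with
    -- `τ = (k + h^∨ − r_s)(·|·)` on `g'_s`
    (hpt : ∀ x : g0, S.pt (J x) = 0)
    (hcur0 : ∀ x y : g0, S.mul 0 (J x) (J y) = J ⁅x, y⁆)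
    (hcur1 : ∀ s ≤ m, ∀ x ∈ gs s, ∀ y ∈ gs s,
      S.mul 1 (J x) (J y) = ((k + hv - r s) * B x y) • S.vac)
    (hcur1orth : ∀ s ≤ m, ∀ t ≤ m, s ≠ t → ∀ x ∈ gs s, ∀ y ∈ gs t,
      S.mul 1 (J x) (J y) = 0)
    (hcurm : ∀ x y : g0, ∀ mm : ℤ, 2 ≤ mm → S.mul mm (J x) (J y) = 0)
    -- dual bases of `g₀` with respect to `(·|·)`
    {ι : Type*} [Fintype ι] (u u' : ι → g0)
    (hdual : ∀ x : g0, ∑ i, B x (u i) • u' i = x) :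
    ∃ c : ℂ,
      (fun L =>
        S.mul 0 L L = S.T L ∧
        S.mul 1 L L = (2 : ℂ) • L ∧
        S.mul 2 L L = 0 ∧
        S.mul 3 L L = (c / 2) • S.vac ∧
        ∀ mm : ℤ, 4 ≤ mm → S.mul mm L L = 0)
      ((2 * (k + hv))⁻¹ • ∑ i, S.mul (-1) (J (u' i)) (J (u i))) := by
  have hdual : IsDualPair B u u' := hdual
  have hne {s t : Fin (m + 1)} (hst : s ≠ t) : (s : ℕ) ≠ t := Fin.val_injective.ne hst
  obtain ⟨A, hA⟩ : ∃ A : g0 →ₗ[ℂ] g0, ∀ s : Fin (m + 1), ∀ x ∈ gs s, A x = (k + hv - r s) • x :=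
    ⟨hdirect.blockScalar fun s => k + hv - r s, fun _ _ => hdirect.blockScalar_apply_of_mem _⟩
  have hJ : S.IsCurrentAlgebra J (B ∘ₗ A) := by
    refine ⟨hpt, hcur0, fun x y => ?_, hcurm⟩
    have hτ : ((S.mul 1).comp J).compl₂ J =
        (B ∘ₗ A).compr₂ (LinearMap.toSpanSingleton ℂ V S.vac) := by
      refine hdirect.linearMap_ext₂ fun s t x hx y hy => ?_
      simp only [LinearMap.compl₂_apply, LinearMap.comp_apply, LinearMap.compr₂_apply,
        LinearMap.toSpanSingleton_apply, hA s x hx, map_smul,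
        LinearMap.smul_apply, smul_eq_mul]
      rcases eq_or_ne s t with rfl | hst
      · exact hcur1 s s.is_le x hx y hy
      · rw [hcur1orth s s.is_le t t.is_le (hne hst) x hx y hy,
          horth s s.is_le t t.is_le (hne hst) x hx y hy, mul_zero, zero_smul]
    simpa using LinearMap.congr_fun₂ hτ x y
  have hcas : casimir ℂ u u' + (2 : ℂ) • A = (2 * (k + hv)) • LinearMap.id := by
    refine hdirect.linearMap_ext fun s x hx => ?_
    have hκ := hdual.casimir_apply_of_mem hBsym hBinv hdirect (fun s => hideal s s.is_le)
      (fun s t hst => horth s s.is_le t t.is_le (hne hst)) (fun s => 2 * r s)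
      (fun s x hx y hy => by rw [killingForm_apply_apply]; exact hkilling s s.is_le x hx y hy) hx
    simp only [LinearMap.add_apply, LinearMap.smul_apply, LinearMap.id_apply, hκ, hA s x hx]
    module
  exact ⟨_, hJ.isVirasoro_sugawaraSum hdual hBsym hBinv (mul_ne_zero two_ne_zero hknc) hcas⟩

/-- Sugawara-type Virasoro field for the degree-zero subalgebra: let
`g₀ = ⊕_{s=0}^m g'_s` be reductive (`g'₀` the center, `g'_s` ideals for `s ≥ 1`) with
invariant form `B` such that the Killing form of `g₀` is `2 r_s B` on `g'_s` and the
level form is `τ = (k + h^∨ − r_s) B` on `g'_s`.  Then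
`L = (1/(2(k+h^∨))) ∑_i :J^{uⁱ} J^{u_i}:` (dual bases w.r.t. `B`) is a Virasoro field on
`V^τ(g₀)`: `[L_λ L] = (∂ + 2λ)L + (c/12)λ³` for some central charge `c`. -/
theorem sugawara_virasoro
    {g0 : Type*} [LieRing g0] [LieAlgebra ℂ g0] [FiniteDimensional ℂ g0]
    {V : Type*} [AddCommGroup V] [Module ℂ V] (S : SVA V)
    (J : g0 →ₗ[ℂ] V)                      -- the currents
    (B : g0 →ₗ[ℂ] g0 →ₗ[ℂ] ℂ)             -- the normalized invariant form (·|·)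
    (k hv : ℂ) (hknc : k + hv ≠ 0)
    (m : ℕ) (gs : ℕ → Submodule ℂ g0) (r : ℕ → ℂ) (hr0 : r 0 = 0)
    (hdirect : DirectSum.IsInternal fun s : Fin (m + 1) => gs (s : ℕ))
    (hcenter : ∀ x ∈ gs 0, ∀ y : g0, ⁅x, y⁆ = 0)
    (hideal : ∀ s ≤ m, ∀ x ∈ gs s, ∀ y : g0, ⁅x, y⁆ ∈ gs s)
    (hBinv : ∀ x y z : g0, B ⁅x, y⁆ z = B x ⁅y, z⁆)
    (hBsym : ∀ x y : g0, B x y = B y x)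
    (horth : ∀ s ≤ m, ∀ t ≤ m, s ≠ t → ∀ x ∈ gs s, ∀ y ∈ gs t, B x y = 0)
    -- `κ_{g₀} = 2 r_s (·|·)` on `g'_s`
    (hkilling : ∀ s ≤ m, ∀ x ∈ gs s, ∀ y ∈ gs s,
      LinearMap.trace ℂ g0 ((LieAlgebra.ad ℂ g0 x) ∘ₗ (LieAlgebra.ad ℂ g0 y)) = 2 * r s * B x y)
    (hnz : ∀ s ≤ m, k + hv - r s ≠ 0)
    -- currents of `V^τ(g₀)`: `[J^x_λ J^y] = J^{[x,y]} + τ(x|y)λ`, with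
    -- `τ = (k + h^∨ − r_s)(·|·)` on `g'_s`
    (hpt : ∀ x : g0, S.pt (J x) = 0)
    (hcur0 : ∀ x y : g0, S.mul 0 (J x) (J y) = J ⁅x, y⁆)
    (hcur1 : ∀ s ≤ m, ∀ x ∈ gs s, ∀ y ∈ gs s,
      S.mul 1 (J x) (J y) = ((k + hv - r s) * B x y) • S.vac)
    (hcur1orth : ∀ s ≤ m, ∀ t ≤ m, s ≠ t → ∀ x ∈ gs s, ∀ y ∈ gs t,
      S.mul 1 (J x) (J y) = 0)
    (hcurm : ∀ x y : g0, ∀ mm : ℤ, 2 ≤ mm → S.mul mm (J x) (J y) = 0)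
    -- dual bases of `g₀` with respect to `(·|·)`
    {ι : Type*} [Fintype ι] (u u' : ι → g0)
    (hdual : ∀ x : g0, ∑ i, B x (u i) • u' i = x) :
    ∃ c : ℂ,
      (fun L =>
        S.mul 0 L L = S.T L ∧
        S.mul 1 L L = (2 : ℂ) • L ∧
        S.mul 2 L L = 0 ∧
        S.mul 3 L L = (c / 2) • S.vac ∧
        ∀ mm : ℤ, 4 ≤ mm → S.mul mm L L = 0)
      ((2 * (k + hv))⁻¹ • ∑ i, S.mul (-1) (J (u' i)) (J (u i))) :=
  sugawara_virasoro_general S J B k hv hknc m gs r hdirect hideal hBinv hBsym horth hkilling hpt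
    hcur0 hcur1 hcur1orth hcurm u u' hdual
end
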